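/- arXiv:1512.02279 — 6 statements merged into one kernel-verified Lean document; each statement's English description precedes it below -/
import Mathlib

section
/- Let S be a regular *-semigroup. Then P(S) = {a·a* : a ∈ S} = {a*·a : a ∈ S}, and E(S) = {p·q : p, q ∈ P(S)}. In particular, the subsemigroup generated by E(S) equals the subsemigroup generated by P(S). -/
/-- In a regular *-semigroup `S` (a semigroup equipped with an
involution `star` satisfying `star (star x) = x`, `star (x*y) = star y * star x`
and `x * star x * x = x`), the set of projections `P(S)` equals both
`{a * star a : a ∈ S}` and `{star a * a : a ∈ S}`; the set of idempotents
`E(S)` equals `P(S) · P(S)`; and consequently the subsemigroup generated by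
`E(S)` equals the subsemigroup generated by `P(S)`. -/
theorem projections_regular_star_semigroup {S : Type*} [Semigroup S] (star : S → S)
    (hinv : ∀ x : S, star (star x) = x)
    (hanti : ∀ x y : S, star (x * y) = star y * star x)
    (hreg : ∀ x : S, x * star x * x = x) :
    ({p : S | star p = p ∧ p * p = p} = {x : S | ∃ a : S, x = a * star a}) ∧
    ({p : S | star p = p ∧ p * p = p} = {x : S | ∃ a : S, x = star a * a}) ∧
    ({e : S | e * e = e} =
      {x : S | ∃ p q : S, (star p = p ∧ p * p = p) ∧ (star q = q ∧ q * q = q) ∧ x = p * q}) ∧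
    Subsemigroup.closure {e : S | e * e = e} =
      Subsemigroup.closure {p : S | star p = p ∧ p * p = p} := by
  -- a * star a is a projection
  have hPstar : ∀ a : S, star (a * star a) = a * star a := fun a => by
    rw [hanti, hinv]
  have hPidem : ∀ a : S, (a * star a) * (a * star a) = a * star a := fun a => by
    calc (a * star a) * (a * star a) = (a * star a * a) * star a := by
          simp only [mul_assoc]
      _ = a * star a := by rw [hreg]
  have hProj : ∀ a : S, a * star a ∈ {p : S | star p = p ∧ p * p = p} :=
    fun a => ⟨hPstar a, hPidem a⟩
  -- first equality
  have h1 : ({p : S | star p = p ∧ p * p = p} = {x : S | ∃ a : S, x = a * star a}) := by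
    ext p
    constructor
    · rintro ⟨hs, hi⟩
      exact ⟨p, by rw [hs, hi]⟩
    · rintro ⟨a, rfl⟩
      exact hProj a
  -- second equality
  have h2 : ({p : S | star p = p ∧ p * p = p} = {x : S | ∃ a : S, x = star a * a}) := by
    ext p
    constructor
    · rintro ⟨hs, hi⟩
      exact ⟨p, by rw [hs, hi]⟩
    · rintro ⟨a, rfl⟩
      have := hProj (star a)
      rwa [hinv] at this
  -- third equality
  have h3 : ({e : S | e * e = e} =
      {x : S | ∃ p q : S, (star p = p ∧ p * p = p) ∧ (star q = q ∧ q * q = q) ∧ x = p * q}) := by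
    ext e
    constructor
    · intro he
      refine ⟨e * star e, star e * e, hProj e, ?_, ?_⟩
      · have := hProj (star e)
        rwa [hinv] at this
      · -- e = (e * star e) * (star e * e)
        have hse : star e * star e = star e := by
          have := congrArg star he
          rwa [hanti] at this
        calc e = e * star e * e := (hreg e).symm
          _ = e * (star e * star e) * e := by rw [hse]
          _ = (e * star e) * (star e * e) := by simp only [mul_assoc]
    · rintro ⟨p, q, ⟨hps, hpi⟩, ⟨hqs, hqi⟩, rfl⟩
      -- pq * pq = pq : from regularity of pq, star (pq) = qp
      have hs : star (p * q) = q * p := by rw [hanti, hps, hqs]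
      have hpi' : ∀ x : S, p * (p * x) = p * x := fun x => by rw [← mul_assoc, hpi]
      have hqi' : ∀ x : S, q * (q * x) = q * x := fun x => by rw [← mul_assoc, hqi]
      have h := hreg (p * q)
      rw [hs] at h
      calc (p * q) * (p * q) = p * q * (q * p) * (p * q) := by
            simp only [mul_assoc, hpi', hqi']
        _ = p * q := h
  refine ⟨h1, h2, h3, le_antisymm ?_ ?_⟩
  · rw [Subsemigroup.closure_le]
    intro e he
    rw [h3] at he
    obtain ⟨p, q, hp, hq, rfl⟩ := he
    exact mul_mem (Subsemigroup.subset_closure hp) (Subsemigroup.subset_closure hq)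
  · exact Subsemigroup.closure_mono (fun p hp => hp.2)
end

section
/- Let S be a finite regular *-semigroup, let D be a D-class of S, let T = ⟨D⟩ be the subsemigroup of S generated by D, and let P = P(S) ∩ D be the set of projections lying in D. Then rank(T) ≥ |P|. -/
/-- Green's R-relation: `x R y` iff `x S¹ = y S¹`, i.e. each of `x`, `y` lies
in the other's principal right ideal. -/
def RRel {S : Type*} [Semigroup S] (x y : S) : Prop :=
  (x = y ∨ ∃ u, x = y * u) ∧ (y = x ∨ ∃ v, y = x * v)

/-- Green's L-relation: `x L y` iff `S¹ x = S¹ y`. -/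
def LRel {S : Type*} [Semigroup S] (x y : S) : Prop :=
  (x = y ∨ ∃ u, x = u * y) ∧ (y = x ∨ ∃ v, y = v * x)

/-- Green's D-relation: `D = R ∘ L`. -/
def DRel {S : Type*} [Semigroup S] (x y : S) : Prop :=
  ∃ z, RRel x z ∧ LRel z y

/-- The rank of a subsemigroup: the least size of a generating set. -/
noncomputable def sgRank {S : Type*} [Semigroup S] (T : Subsemigroup S) : ℕ :=
  sInf {k | ∃ X : Finset S, X.card = k ∧ Subsemigroup.closure ↑X = T}

/-- The idempotent rank of a subsemigroup: the least size of a generating set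
consisting of idempotents. -/
noncomputable def sgIdRank {S : Type*} [Semigroup S] (T : Subsemigroup S) : ℕ :=
  sInf {k | ∃ X : Finset S, X.card = k ∧ (∀ x ∈ X, x * x = x) ∧ Subsemigroup.closure ↑X = T}

namespace RankAux

variable {S : Type*} [Semigroup S]

/-- `pw x n = x ^ (n+1)`. -/
def pw (x : S) : ℕ → S
  | 0 => x
  | n + 1 => pw x n * x

lemma pw_succ (x : S) (n : ℕ) : pw x (n + 1) = pw x n * x := rfl

lemma pw_comm (x : S) (n : ℕ) : pw x n * x = x * pw x n := by
  induction n with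
  | zero => rfl
  | succ n ih =>
    show (pw x n * x) * x = x * (pw x n * x)
    conv_lhs => rw [ih]
    rw [mul_assoc]

lemma pw_succ' (x : S) (n : ℕ) : pw x (n + 1) = x * pw x n := by
  rw [pw_succ, pw_comm]

lemma pw_add (x : S) (m n : ℕ) : pw x (m + n + 1) = pw x m * pw x n := by
  induction n with
  | zero => rfl
  | succ n ih =>
    rw [show m + (n + 1) + 1 = (m + n + 1) + 1 by ring, pw_succ, ih, pw_succ, mul_assoc]

/-- Stability-type lemma in a finite semigroup: `x = u x w` implies `x = x wᵏ`. -/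
lemma stab [Finite S] (x u w : S) (h : x = u * x * w) : ∃ k, x = x * pw w k := by
  have key : ∀ n, x = pw u n * x * pw w n := by
    intro n
    induction n with
    | zero => exact h
    | succ n ih =>
      calc x = u * x * w := h
        _ = u * (pw u n * x * pw w n) * w := by rw [← ih]
        _ = pw u (n + 1) * x * pw w (n + 1) := by rw [pw_succ', pw_succ]; simp [mul_assoc]
  have aux : ∀ m n : ℕ, m < n → pw w m = pw w n → ∃ k, x = x * pw w k := by
    intro m n hmn he
    have hn : n = m + (n - m - 1) + 1 := by omega
    refine ⟨n - m - 1, ?_⟩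
    have hk := key m
    have : x * pw w (n - m - 1) = x := by
      conv_lhs => rw [hk]
      rw [mul_assoc, ← pw_add, ← hn, ← he, ← hk]
    exact this.symm
  obtain ⟨m, n, hmn, he⟩ := Finite.exists_ne_map_eq_of_infinite (pw w)
  rcases lt_or_gt_of_ne hmn with h' | h'
  · exact aux m n h' he
  · exact aux n m h' he.symm

/-- `x ≤_J y` (in the regular case, the element form suffices). -/
def JLe (x y : S) : Prop := ∃ u v, x = u * y * v

section Star

variable (star : S → S)

lemma jle_of_r (hreg : ∀ x : S, x * star x * x = x) {x y : S}
    (h : x = y ∨ ∃ u, x = y * u) : JLe x y := by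
  rcases h with rfl | ⟨u, hu⟩
  · exact ⟨x * star x, star x * x, by rw [hreg, ← mul_assoc, hreg]⟩
  · exact ⟨x * star x, u, by rw [mul_assoc, ← hu, hreg]⟩

lemma jle_of_l (hreg : ∀ x : S, x * star x * x = x) {x y : S}
    (h : x = y ∨ ∃ u, x = u * y) : JLe x y := by
  rcases h with rfl | ⟨u, hu⟩
  · exact ⟨x * star x, star x * x, by rw [hreg, ← mul_assoc, hreg]⟩
  · exact ⟨u, star x * x, by rw [← hu, ← mul_assoc, hreg]⟩

lemma jle_trans {x y z : S} (h1 : JLe x y) (h2 : JLe y z) : JLe x z := by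
  obtain ⟨u, v, h⟩ := h1
  obtain ⟨u', v', h'⟩ := h2
  refine ⟨u * u', v' * v, ?_⟩
  conv_lhs => rw [h, h']
  simp [mul_assoc]

lemma jle_mul {x y : S} (z : S) (h : JLe x y) : JLe (x * z) y := by
  obtain ⟨u, v, hx⟩ := h
  refine ⟨u, v * z, ?_⟩
  rw [← mul_assoc, ← hx]

lemma jle_of_drel (hreg : ∀ x : S, x * star x * x = x) {x y : S}
    (h : DRel x y) : JLe x y ∧ JLe y x := by
  obtain ⟨z, hr, hl⟩ := h
  exact ⟨jle_trans (jle_of_r star hreg hr.1) (jle_of_l star hreg hl.1),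
    jle_trans (jle_of_l star hreg hl.2) (jle_of_r star hreg hr.2)⟩

end Star

end RankAux

open RankAux in
/-- Let `S` be a finite regular *-semigroup, `D` the D-class
of an element `a`, `T = ⟨D⟩` and `P = P(S) ∩ D`.  Then `rank T ≥ |P|`. -/
theorem rank_genDClass_ge {S : Type*} [Semigroup S] [Fintype S] (star : S → S)
    (hinv : ∀ x : S, star (star x) = x)
    (hanti : ∀ x y : S, star (x * y) = star y * star x)
    (hreg : ∀ x : S, x * star x * x = x)
    (a : S) :
    Set.ncard {p : S | (star p = p ∧ p * p = p) ∧ DRel p a} ≤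
      sgRank (Subsemigroup.closure {x : S | DRel x a}) := by
  classical
  set T := Subsemigroup.closure {x : S | DRel x a} with hT
  have hne : Set.Nonempty {k | ∃ X : Finset S, X.card = k ∧ Subsemigroup.closure ↑X = T} := by
    refine ⟨((T : Set S).toFinset).card, (T : Set S).toFinset, rfl, ?_⟩
    rw [Set.coe_toFinset, Subsemigroup.closure_eq]
  obtain ⟨X, hXcard, hXcl⟩ :
      ∃ X : Finset S, X.card = sgRank T ∧ Subsemigroup.closure (↑X : Set S) = T :=
    Nat.sInf_mem hne
  rw [← hXcard, ← Set.ncard_coe_finset]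
  refine le_trans (le_trans ?_
    (Set.ncard_le_ncard (Set.Subset.refl _) (Set.toFinite ((fun x => x * star x) '' ↑X))))
    (Set.ncard_image_le (Set.toFinite _))
  refine Set.ncard_le_ncard ?_ (Set.toFinite _)
  rintro p ⟨⟨hps, hpp⟩, hpD⟩
  have hpT : p ∈ Subsemigroup.closure (↑X : Set S) := by
    rw [hXcl]; exact Subsemigroup.subset_closure hpD
  have hstart : ∃ x ∈ X, p = x ∨ ∃ t, p = x * t := by
    refine Subsemigroup.closure_induction (p := fun y _ => ∃ x ∈ X, y = x ∨ ∃ t, y = x * t)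
      (fun x hx => ⟨x, hx, Or.inl rfl⟩) ?_ hpT
    rintro y z _ _ ⟨x, hx, hcase⟩ _
    refine ⟨x, hx, Or.inr ?_⟩
    rcases hcase with rfl | ⟨t, rfl⟩
    · exact ⟨z, rfl⟩
    · exact ⟨t * z, mul_assoc _ _ _⟩
  obtain ⟨x, hxX, hcase⟩ := hstart
  refine ⟨x, hxX, ?_⟩
  show x * star x = p
  rcases hcase with rfl | ⟨t, hpt⟩
  · rw [hps, hpp]
  -- `x` lies in `T`, hence `x ≤_J a ≤_J p`.
  have hxT : x ∈ T := by rw [← hXcl]; exact Subsemigroup.subset_closure hxX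
  have hxa : JLe x a := by
    refine Subsemigroup.closure_induction (p := fun y _ => JLe y a)
      (fun d hd => (jle_of_drel star hreg hd).1) ?_ hxT
    intro y z _ _ hy _
    exact jle_mul z hy
  have hap : JLe a p := (jle_of_drel star hreg hpD).2
  obtain ⟨α, β, hαβ⟩ := jle_trans hxa hap
  have hx2 : x = α * x * (t * β) := by
    conv_lhs => rw [hαβ, hpt]
    simp [mul_assoc]
  obtain ⟨k, hk⟩ := stab x α (t * β) hx2
  have hxps : ∃ s, x = p * s := by
    cases k with
    | zero =>
      refine ⟨β, ?_⟩
      rw [hpt, mul_assoc]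
      exact hk
    | succ k =>
      refine ⟨β * pw (t * β) k, ?_⟩
      calc x = x * pw (t * β) (k + 1) := hk
        _ = x * ((t * β) * pw (t * β) k) := by rw [pw_succ']
        _ = (x * t) * (β * pw (t * β) k) := by simp [mul_assoc]
        _ = p * (β * pw (t * β) k) := by rw [← hpt]
  obtain ⟨s, hs⟩ := hxps
  have hq_idem : (x * star x) * (x * star x) = x * star x := by
    calc (x * star x) * (x * star x) = (x * star x * x) * star x := by simp [mul_assoc]
      _ = x * star x := by rw [hreg]
  have h1 : p = (x * star x) * p := by
    calc p = x * t := hpt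
      _ = (x * star x * x) * t := by rw [hreg]
      _ = (x * star x) * (x * t) := by rw [mul_assoc]
      _ = (x * star x) * p := by rw [← hpt]
  have h2 : x * star x = p * (s * star x) := by
    rw [← mul_assoc, ← hs]
  have h3 : (x * star x) * p = p := by
    conv_lhs => rw [h1]
    rw [← mul_assoc, hq_idem, ← h1]
  have h4 : p * (x * star x) = x * star x := by
    conv_lhs => rw [h2]
    rw [← mul_assoc, hpp, ← h2]
  have hqs : star (x * star x) = x * star x := by rw [hanti, hinv]
  calc x * star x = star (x * star x) := hqs.symm
    _ = star (p * (x * star x)) := by rw [h4]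
    _ = star (x * star x) * star p := by rw [hanti]
    _ = (x * star x) * p := by rw [hqs, hps]
    _ = p := h3
end

section
/- Let S be a finite regular *-semigroup, let D be a D-class of S, let T = ⟨D⟩ be the subsemigroup of S generated by D, and let P = P(S) ∩ D. If every H-class contained in D is a singleton, then rank(T) = |P|. -/
namespace StarAux

variable {S : Type*} [Semigroup S]

/-- `spow x n = x^(n+1)`. -/
def spow (x : S) : ℕ → S
  | 0 => x
  | n+1 => x * spow x n

lemma spow_add (x : S) (m n : ℕ) : spow x (m + n + 1) = spow x m * spow x n := by
  induction m with
  | zero =>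
    have h : 0 + n + 1 = n + 1 := by omega
    rw [h]; rfl
  | succ m ih =>
    have h : m + 1 + n + 1 = (m + n + 1) + 1 := by omega
    rw [h, spow, ih, spow, mul_assoc]

lemma spow_comm (x : S) (n : ℕ) : spow x n * x = x * spow x n := by
  induction n with
  | zero => rfl
  | succ n ih => rw [spow, mul_assoc, ih]

lemma exists_idem_spow [Finite S] (x : S) : ∃ N, spow x N * spow x N = spow x N := by
  have key : ∃ a p, 0 < p ∧ spow x a = spow x (a + p) := by
    obtain ⟨a, b, hne, heq⟩ := Finite.exists_ne_map_eq_of_infinite (spow x)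
    rcases Nat.lt_or_ge a b with h | h
    · exact ⟨a, b - a, by omega, by rw [heq]; congr 1; omega⟩
    · have h' : b < a := lt_of_le_of_ne h (Ne.symm hne)
      exact ⟨b, a - b, by omega, by rw [← heq]; congr 1; omega⟩
  obtain ⟨a, p, hp, hper⟩ := key
  have shift : ∀ k, spow x (a + k) = spow x (a + p + k) := by
    intro k; induction k with
    | zero => simpa using hper
    | succ k ih =>
      have e1 : a + (k+1) = (a+k) + 1 := by omega
      have e2 : a + p + (k+1) = (a+p+k) + 1 := by omega
      rw [e1, e2, spow, spow, ih]
  have stepj : ∀ j m, a ≤ m → spow x (m + j * p) = spow x m := by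
    intro j
    induction j with
    | zero => intro m _; simp
    | succ j ih =>
      intro m hm
      have e : m + (j+1) * p = (m + p) + j * p := by ring
      rw [e, ih _ (by omega)]
      have h := shift (m - a)
      have e1 : a + (m - a) = m := by omega
      have e2 : a + p + (m - a) = m + p := by omega
      rw [e1] at h
      rw [e2] at h
      exact h.symm
  have hap : a + 1 ≤ (a+1)*p := Nat.le_mul_of_pos_right _ hp
  refine ⟨(a+1)*p - 1, ?_⟩
  rw [← spow_add]
  have hN : (a+1)*p - 1 + ((a+1)*p - 1) + 1 = ((a+1)*p - 1) + (a+1) * p := by omega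
  rw [hN, stepj (a+1) _ (by omega)]

lemma stab [Finite S] {x y u s t : S} (hx : x = y * u) (hy : y = s * (x * t)) :
    ∃ v, y = x * v := by
  have base : y = s * (y * (u * t)) := by
    conv_lhs => rw [hy, hx]
    rw [mul_assoc]
  have key : ∀ n, y = spow s n * (y * spow (u*t) n) := by
    intro n; induction n with
    | zero => exact base
    | succ n ih =>
      calc y = s * (y * (u*t)) := base
      _ = s * ((spow s n * (y * spow (u*t) n)) * (u*t)) := by rw [← ih]
      _ = s * (spow s n * (y * (spow (u*t) n * (u*t)))) := by simp only [mul_assoc]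
      _ = spow s (n+1) * (y * spow (u*t) (n+1)) := by
          rw [spow_comm, spow, spow, mul_assoc]
          exact (mul_assoc _ _ _).symm
  obtain ⟨N, hN⟩ := exists_idem_spow (u * t)
  have h1 : y = y * spow (u*t) N := by
    have h2 := key N
    calc y = spow s N * (y * spow (u*t) N) := h2
    _ = spow s N * (y * (spow (u*t) N * spow (u*t) N)) := by rw [hN]
    _ = (spow s N * (y * spow (u*t) N)) * spow (u*t) N := by simp only [mul_assoc]
    _ = y * spow (u*t) N := by rw [← h2]
  obtain ⟨c, hc⟩ : ∃ c, spow (u*t) N = u * c := by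
    cases N with
    | zero => exact ⟨t, rfl⟩
    | succ n => exact ⟨t * spow (u*t) n, by rw [spow, mul_assoc]⟩
  refine ⟨c, ?_⟩
  calc y = y * spow (u*t) N := h1
  _ = y * (u * c) := by rw [hc]
  _ = (y * u) * c := (mul_assoc _ _ _).symm
  _ = x * c := by rw [← hx]


section Green

lemma rrel_refl (x : S) : RRel x x := ⟨Or.inl rfl, Or.inl rfl⟩
lemma lrel_refl (x : S) : LRel x x := ⟨Or.inl rfl, Or.inl rfl⟩
lemma rrel_symm {x y : S} (h : RRel x y) : RRel y x := ⟨h.2, h.1⟩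
lemma lrel_symm {x y : S} (h : LRel x y) : LRel y x := ⟨h.2, h.1⟩

variable {star : S → S}

lemma regR (hreg : ∀ x : S, x * star x * x = x) (x : S) : x = x * (star x * x) := by
  rw [← mul_assoc]; exact (hreg x).symm

lemma regL (hreg : ∀ x : S, x * star x * x = x) (x : S) : x = (x * star x) * x :=
  (hreg x).symm

lemma rrel_iff (hreg : ∀ x : S, x * star x * x = x) {x y : S} :
    RRel x y ↔ (∃ u, x = y * u) ∧ (∃ v, y = x * v) := by
  constructor
  · rintro ⟨h1, h2⟩
    constructor
    · rcases h1 with rfl | h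
      · exact ⟨star x * x, regR hreg x⟩
      · exact h
    · rcases h2 with rfl | h
      · exact ⟨star y * y, regR hreg y⟩
      · exact h
  · rintro ⟨h1, h2⟩; exact ⟨Or.inr h1, Or.inr h2⟩

lemma lrel_iff (hreg : ∀ x : S, x * star x * x = x) {x y : S} :
    LRel x y ↔ (∃ u, x = u * y) ∧ (∃ v, y = v * x) := by
  constructor
  · rintro ⟨h1, h2⟩
    constructor
    · rcases h1 with rfl | h
      · exact ⟨x * star x, regL hreg x⟩
      · exact h
    · rcases h2 with rfl | h
      · exact ⟨y * star y, regL hreg y⟩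
      · exact h
  · rintro ⟨h1, h2⟩; exact ⟨Or.inr h1, Or.inr h2⟩

lemma rrel_trans (hreg : ∀ x : S, x * star x * x = x) {x y z : S}
    (h1 : RRel x y) (h2 : RRel y z) : RRel x z := by
  rw [rrel_iff hreg] at *
  obtain ⟨⟨u1, hu1⟩, ⟨v1, hv1⟩⟩ := h1
  obtain ⟨⟨u2, hu2⟩, ⟨v2, hv2⟩⟩ := h2
  exact ⟨⟨u2 * u1, by rw [hu1, hu2, mul_assoc]⟩, ⟨v1 * v2, by rw [hv2, hv1, mul_assoc]⟩⟩

lemma lrel_trans (hreg : ∀ x : S, x * star x * x = x) {x y z : S}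
    (h1 : LRel x y) (h2 : LRel y z) : LRel x z := by
  rw [lrel_iff hreg] at *
  obtain ⟨⟨u1, hu1⟩, ⟨v1, hv1⟩⟩ := h1
  obtain ⟨⟨u2, hu2⟩, ⟨v2, hv2⟩⟩ := h2
  exact ⟨⟨u1 * u2, by rw [hu1, hu2, mul_assoc]⟩, ⟨v2 * v1, by rw [hv2, hv1, mul_assoc]⟩⟩

/-- From `x L z R y` produce `m` with `x R m L y`. -/
lemma lr_swap (hreg : ∀ x : S, x * star x * x = x) {x z y : S}
    (h1 : LRel x z) (h2 : RRel z y) : ∃ m, RRel x m ∧ LRel m y := by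
  rw [lrel_iff hreg] at h1
  rw [rrel_iff hreg] at h2
  obtain ⟨⟨s, hs⟩, ⟨s', hs'⟩⟩ := h1   -- x = s * z, z = s' * x
  obtain ⟨⟨t, ht⟩, ⟨t', ht'⟩⟩ := h2   -- z = y * t, y = z * t'
  have hm : x * t' = s * y := by rw [hs, mul_assoc, ← ht']
  refine ⟨x * t', ?_, ?_⟩
  · rw [rrel_iff hreg]
    exact ⟨⟨t, by rw [hm, mul_assoc, ← ht, hs]⟩, ⟨t', rfl⟩⟩
  · rw [lrel_iff hreg]
    exact ⟨⟨s, hm⟩, ⟨s', by rw [ht', hs', mul_assoc]⟩⟩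

/-- From `x R z L y` produce `m` with `x L m R y`. -/
lemma rl_swap (hreg : ∀ x : S, x * star x * x = x) {x z y : S}
    (h1 : RRel x z) (h2 : LRel z y) : ∃ m, LRel x m ∧ RRel m y := by
  rw [rrel_iff hreg] at h1
  rw [lrel_iff hreg] at h2
  obtain ⟨⟨s, hs⟩, ⟨s', hs'⟩⟩ := h1   -- x = z * s, z = x * s'
  obtain ⟨⟨t, ht⟩, ⟨t', ht'⟩⟩ := h2   -- z = t * y, y = t' * z
  have hm : t' * x = y * s := by rw [hs, ← mul_assoc, ← ht']
  refine ⟨t' * x, ?_, ?_⟩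
  · rw [lrel_iff hreg]
    exact ⟨⟨t, by rw [hm, ← mul_assoc, ← ht, hs]⟩, ⟨t', rfl⟩⟩
  · rw [rrel_iff hreg]
    exact ⟨⟨s, hm⟩, ⟨s', by rw [ht', hs', mul_assoc]⟩⟩

lemma drel_refl (x : S) : DRel x x := ⟨x, rrel_refl x, lrel_refl x⟩

lemma drel_symm (hreg : ∀ x : S, x * star x * x = x) {x y : S} (h : DRel x y) :
    DRel y x := by
  obtain ⟨z, hR, hL⟩ := h
  obtain ⟨m, hR', hL'⟩ := lr_swap hreg (lrel_symm hL) (rrel_symm hR)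
  exact ⟨m, hR', hL'⟩

lemma drel_trans (hreg : ∀ x : S, x * star x * x = x) {x y z : S}
    (h1 : DRel x y) (h2 : DRel y z) : DRel x z := by
  obtain ⟨b, hR1, hL1⟩ := h1
  obtain ⟨c, hR2, hL2⟩ := h2
  obtain ⟨m, hRm, hLm⟩ := lr_swap hreg hL1 hR2
  exact ⟨m, rrel_trans hreg hR1 hRm, lrel_trans hreg hLm hL2⟩

lemma drel_of_rrel (hreg : ∀ x : S, x * star x * x = x) {x y : S} (h : RRel x y) :
    DRel x y := ⟨y, h, lrel_refl y⟩

lemma drel_of_lrel {x y : S} (h : LRel x y) : DRel x y := ⟨x, rrel_refl x, h⟩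

section Star
variable {star : S → S}

lemma star_r (hinv : ∀ x : S, star (star x) = x)
    (hanti : ∀ x y : S, star (x * y) = star y * star x) (x : S) :
    star (x * star x) = x * star x := by rw [hanti, hinv]

lemma idem_r (hreg : ∀ x : S, x * star x * x = x) (x : S) :
    (x * star x) * (x * star x) = x * star x := by
  rw [← mul_assoc, hreg]

lemma star_l (hinv : ∀ x : S, star (star x) = x)
    (hanti : ∀ x y : S, star (x * y) = star y * star x) (x : S) :
    star (star x * x) = star x * x := by rw [hanti, hinv]

lemma idem_l (hreg : ∀ x : S, x * star x * x = x) (x : S) :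
    (star x * x) * (star x * x) = star x * x := by
  rw [mul_assoc, ← mul_assoc x (star x) x, hreg]

lemma rrel_r (hreg : ∀ x : S, x * star x * x = x) (x : S) : RRel x (x * star x) :=
  ⟨Or.inr ⟨x, (hreg x).symm⟩, Or.inr ⟨star x, rfl⟩⟩

lemma lrel_l (hreg : ∀ x : S, x * star x * x = x) (x : S) : LRel x (star x * x) :=
  ⟨Or.inr ⟨x, regR hreg x⟩, Or.inr ⟨star x, rfl⟩⟩

/-- Two R-related projections are equal. -/
lemma proj_unique_R (hanti : ∀ x y : S, star (x * y) = star y * star x)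
    (hreg : ∀ x : S, x * star x * x = x) {p q : S}
    (hps : star p = p) (hp2 : p * p = p) (hqs : star q = q) (hq2 : q * q = q)
    (h : RRel p q) : p = q := by
  rw [rrel_iff hreg] at h
  obtain ⟨⟨u, hu⟩, ⟨v, hv⟩⟩ := h
  have hqp : q * p = p := by
    conv_lhs => rw [hu, ← mul_assoc, hq2]
    exact hu.symm
  have hpq : p * q = q := by
    conv_lhs => rw [hv, ← mul_assoc, hp2]
    exact hv.symm
  calc p = star p := hps.symm
  _ = star (q * p) := by rw [hqp]
  _ = star p * star q := by rw [hanti]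
  _ = p * q := by rw [hps, hqs]
  _ = q := hpq

/-- Two L-related projections are equal. -/
lemma proj_unique_L (hanti : ∀ x y : S, star (x * y) = star y * star x)
    (hreg : ∀ x : S, x * star x * x = x) {p q : S}
    (hps : star p = p) (hp2 : p * p = p) (hqs : star q = q) (hq2 : q * q = q)
    (h : LRel p q) : p = q := by
  rw [lrel_iff hreg] at h
  obtain ⟨⟨u, hu⟩, ⟨v, hv⟩⟩ := h
  have hpq : p * q = p := by
    conv_lhs => rw [hu, mul_assoc, hq2]
    exact hu.symm
  have hqp : q * p = q := by
    conv_lhs => rw [hv, mul_assoc, hp2]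
    exact hv.symm
  calc p = star p := hps.symm
  _ = star (p * q) := by rw [hpq]
  _ = star q * star p := by rw [hanti]
  _ = q * p := by rw [hps, hqs]
  _ = q := hqp

lemma r_eq_of_rrel_proj (hinv : ∀ x : S, star (star x) = x)
    (hanti : ∀ x y : S, star (x * y) = star y * star x)
    (hreg : ∀ x : S, x * star x * x = x) {x p : S}
    (hps : star p = p) (hp2 : p * p = p)
    (h : RRel x p) : x * star x = p :=
  proj_unique_R hanti hreg (star_r hinv hanti x) (idem_r hreg x) hps hp2
    (rrel_trans hreg (rrel_symm (rrel_r hreg x)) h)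

lemma l_eq_of_lrel_proj (hinv : ∀ x : S, star (star x) = x)
    (hanti : ∀ x y : S, star (x * y) = star y * star x)
    (hreg : ∀ x : S, x * star x * x = x) {x p : S}
    (hps : star p = p) (hp2 : p * p = p)
    (h : LRel x p) : star x * x = p :=
  proj_unique_L hanti hreg (star_l hinv hanti x) (idem_l hreg x) hps hp2
    (lrel_trans hreg (lrel_symm (lrel_l hreg x)) h)

/-- If `l x = r y` then `xy R x`. -/
lemma mul_rrel (hreg : ∀ x : S, x * star x * x = x) {x y : S}
    (h : star x * x = y * star y) : RRel (x * y) x := by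
  refine ⟨Or.inr ⟨y, rfl⟩, Or.inr ⟨star y, ?_⟩⟩
  rw [mul_assoc, ← h, ← mul_assoc, hreg]

/-- If `l x = r y` then `xy L y`. -/
lemma mul_lrel (hreg : ∀ x : S, x * star x * x = x) {x y : S}
    (h : star x * x = y * star y) : LRel (x * y) y := by
  refine ⟨Or.inr ⟨x, rfl⟩, Or.inr ⟨star x, ?_⟩⟩
  rw [← mul_assoc, h]
  exact (hreg y).symm

lemma first_factor (hreg : ∀ x : S, x * star x * x = x) {Y : Set S} {z : S}
    (hz : z ∈ Subsemigroup.closure Y) : ∃ x ∈ Y, ∃ u, z = x * u := by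
  induction hz using Subsemigroup.closure_induction with
  | mem x hx => exact ⟨x, hx, star x * x, regR hreg x⟩
  | mul z1 z2 h1 h2 ih1 ih2 =>
    obtain ⟨x, hxY, u, hu⟩ := ih1
    exact ⟨x, hxY, u * z2, by rw [hu, mul_assoc]⟩

end Star
end Green
end StarAux

open StarAux

/-- Let `S` be a finite regular *-semigroup, `D` the D-class
of an element `a`, `T = ⟨D⟩` and `P = P(S) ∩ D`.  If every H-class contained
in `D` is a singleton, then `rank T = |P|`. -/
theorem rank_genDClass_eq {S : Type*} [Semigroup S] [Fintype S] (star : S → S)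
    (hinv : ∀ x : S, star (star x) = x)
    (hanti : ∀ x y : S, star (x * y) = star y * star x)
    (hreg : ∀ x : S, x * star x * x = x)
    (a : S)
    (hH : ∀ x y : S, DRel x a → RRel x y → LRel x y → y = x) :
    sgRank (Subsemigroup.closure {x : S | DRel x a}) =
      Set.ncard {p : S | (star p = p ∧ p * p = p) ∧ DRel p a} := by

  classical
  set Dset : Set S := {x : S | DRel x a} with hDset
  set Pset : Set S := {p : S | (star p = p ∧ p * p = p) ∧ DRel p a} with hPset
  have hDmemR : ∀ {x y : S}, DRel y a → RRel x y → DRel x a :=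
    fun hy hR => drel_trans hreg (drel_of_rrel hreg hR) hy
  have hDmemL : ∀ {x y : S}, DRel y a → LRel x y → DRel x a :=
    fun hy hL => drel_trans hreg (drel_of_lrel hL) hy
  have hrP : ∀ {x : S}, DRel x a → (x * star x) ∈ Pset := fun {x} hx =>
    ⟨⟨star_r hinv hanti x, idem_r hreg x⟩, hDmemR hx (rrel_symm (rrel_r hreg x))⟩
  have hlP : ∀ {x : S}, DRel x a → (star x * x) ∈ Pset := fun {x} hx =>
    ⟨⟨star_l hinv hanti x, idem_l hreg x⟩, hDmemL hx (lrel_symm (lrel_l hreg x))⟩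
  have hsame : ∀ x y : S, DRel x a → x * star x = y * star y →
      star x * x = star y * y → y = x := by
    intro x y hx hr hl
    have hR : RRel x y := rrel_trans hreg (rrel_r hreg x)
      (by rw [hr]; exact rrel_symm (rrel_r hreg y))
    have hL : LRel x y := lrel_trans hreg (lrel_l hreg x)
      (by rw [hl]; exact lrel_symm (lrel_l hreg y))
    exact hH x y hx hR hL
  set n := Pset.ncard with hn
  have hPa : (a * star a) ∈ Pset := hrP (drel_refl a)
  haveI hnea : Nonempty ↥Pset := ⟨⟨_, hPa⟩⟩
  have hcard : Fintype.card ↥Pset = n := by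
    rw [hn, ← Nat.card_coe_set_eq, Nat.card_eq_fintype_card]
  have hn0 : 0 < n := by rw [← hcard]; exact Fintype.card_pos
  haveI : NeZero n := ⟨hn0.ne'⟩
  let σ : ZMod n ≃ ↥Pset := Fintype.equivOfCardEq (by rw [ZMod.card]; exact hcard.symm)
  let p : ZMod n → S := fun i => ((σ i : ↥Pset) : S)
  have hpP : ∀ i, p i ∈ Pset := fun i => (σ i).2
  have hpinj : ∀ i j, p i = p j → i = j := fun i j h => σ.injective (Subtype.ext h)
  have hpsymm : ∀ (x : S) (hx : x ∈ Pset), p (σ.symm ⟨x, hx⟩) = x :=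
    fun x hx => congrArg Subtype.val (σ.apply_symm_apply ⟨x, hx⟩)
  -- construct the element of D with given r and l
  have hEex : ∀ i j : ZMod n, ∃ z : S, DRel z a ∧ z * star z = p i ∧ star z * z = p j := by
    intro i j
    obtain ⟨⟨hpis, hpi2⟩, hpiD⟩ := hpP i
    obtain ⟨⟨hpjs, hpj2⟩, hpjD⟩ := hpP j
    obtain ⟨z, hRz, hLz⟩ : DRel (p i) (p j) :=
      drel_trans hreg hpiD (drel_symm hreg hpjD)
    exact ⟨z, hDmemR hpiD (rrel_symm hRz),
      r_eq_of_rrel_proj hinv hanti hreg hpis hpi2 (rrel_symm hRz),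
      l_eq_of_lrel_proj hinv hanti hreg hpjs hpj2 hLz⟩
  choose E hE1 hE2 hE3 using hEex
  have hEmul : ∀ i j k : ZMod n, E i j * E j k = E i k := by
    intro i j k
    have hmid : star (E i j) * (E i j) = E j k * star (E j k) := by
      rw [hE3, hE2]
    have hR : RRel (E i j * E j k) (E i j) := mul_rrel hreg hmid
    have hL : LRel (E i j * E j k) (E j k) := mul_lrel hreg hmid
    have hD : DRel (E i j * E j k) a := hDmemR (hE1 i j) hR
    have hr : (E i j * E j k) * star (E i j * E j k) = p i := by
      refine r_eq_of_rrel_proj hinv hanti hreg (hpP i).1.1 (hpP i).1.2 ?_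
      refine rrel_trans hreg hR ?_
      rw [← hE2 i j]; exact rrel_r hreg _
    have hl : star (E i j * E j k) * (E i j * E j k) = p k := by
      refine l_eq_of_lrel_proj hinv hanti hreg (hpP k).1.1 (hpP k).1.2 ?_
      refine lrel_trans hreg hL ?_
      rw [← hE3 j k]; exact lrel_l hreg _
    exact (hsame _ _ hD (by rw [hr, hE2]) (by rw [hl, hE3])).symm
  have hEd : ∀ d : S, DRel d a → ∃ i j, d = E i j := by
    intro d hd
    have hri : d * star d ∈ Pset := hrP hd
    have hlj : star d * d ∈ Pset := hlP hd
    refine ⟨σ.symm ⟨_, hri⟩, σ.symm ⟨_, hlj⟩, ?_⟩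
    exact (hsame d _ hd (by rw [hE2, hpsymm]) (by rw [hE3, hpsymm])).symm
  -- generating set
  let g : ZMod n → S := fun i => E i (i + 1)
  let X : Finset S := Finset.image g Finset.univ
  have hgX : ∀ i, g i ∈ X := fun i => Finset.mem_image_of_mem g (Finset.mem_univ i)
  have hXD : (X : Set S) ⊆ Dset := by
    intro x hx
    simp only [X, Finset.coe_image, Set.mem_image, Finset.mem_coe] at hx
    obtain ⟨i, _, rfl⟩ := hx
    exact hE1 i (i + 1)
  have hginj : Function.Injective g := by
    intro i j h
    apply hpinj
    rw [← hE2 i (i+1), ← hE2 j (j+1)]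
    rw [show E i (i+1) = E j (j+1) from h]
  have hXcard : X.card = n := by
    rw [Finset.card_image_of_injective _ hginj, Finset.card_univ, ZMod.card]
  -- chains of generators
  let c : ZMod n → ℕ → S := fun i => Nat.rec (g i) (fun k ck => ck * g (i + k + 1))
  have hchain : ∀ (k : ℕ) (i : ZMod n),
      c i k ∈ Subsemigroup.closure (X : Set S) ∧ c i k = E i (i + (k : ZMod n) + 1) := by
    intro k
    induction k with
    | zero =>
      intro i
      refine ⟨Subsemigroup.subset_closure (hgX i), ?_⟩
      show g i = E i (i + ((0:ℕ) : ZMod n) + 1)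
      rw [Nat.cast_zero, add_zero]
    | succ k ih =>
      intro i
      obtain ⟨h1, h2⟩ := ih i
      constructor
      · exact mul_mem h1 (Subsemigroup.subset_closure (hgX (i + (k : ZMod n) + 1)))
      · show c i k * g (i + (k : ZMod n) + 1) = E i (i + ((k+1 : ℕ) : ZMod n) + 1)
        rw [h2]
        show E i (i + (k : ZMod n) + 1) * E (i + (k : ZMod n) + 1) (i + (k : ZMod n) + 1 + 1) = _
        rw [hEmul]
        congr 1
        push_cast
        ring
  have hEX : ∀ i j : ZMod n, E i j ∈ Subsemigroup.closure (X : Set S) := by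
    intro i j
    obtain ⟨hmem, heq⟩ := hchain (j - i - 1).val i
    have hval : (((j - i - 1).val : ℕ) : ZMod n) = j - i - 1 :=
      ZMod.natCast_rightInverse (j - i - 1)
    rw [heq, hval, show i + (j - i - 1) + 1 = j by ring] at hmem
    exact hmem
  have hclos : Subsemigroup.closure (X : Set S) = Subsemigroup.closure Dset := by
    apply le_antisymm
    · exact Subsemigroup.closure_mono hXD
    · rw [Subsemigroup.closure_le]
      intro d hd
      obtain ⟨i, j, rfl⟩ := hEd d hd
      exact hEX i j
  have hmem_n : n ∈ {k | ∃ X : Finset S, X.card = k ∧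
      Subsemigroup.closure ↑X = Subsemigroup.closure Dset} := ⟨X, hXcard, hclos⟩
  have hlow : ∀ k ∈ {k | ∃ X : Finset S, X.card = k ∧
      Subsemigroup.closure ↑X = Subsemigroup.closure Dset}, n ≤ k := by
    rintro k ⟨Y, hYcard, hYclos⟩
    have hfind : ∀ pp ∈ Pset, ∃ x ∈ (Y : Set S), x * star x = pp := by
      rintro pp ⟨⟨hpps, hpp2⟩, hppD⟩
      have h1 : pp ∈ Subsemigroup.closure (Y : Set S) := by
        rw [hYclos]; exact Subsemigroup.subset_closure hppD
      obtain ⟨x, hxY, u, hxu⟩ := first_factor hreg h1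
      have h2 : x ∈ Subsemigroup.closure Dset := by
        rw [← hYclos]; exact Subsemigroup.subset_closure hxY
      obtain ⟨y, hyD, v, hyv⟩ := first_factor hreg h2
      have hpy : pp = y * (v * u) := by rw [hxu, hyv, mul_assoc]
      obtain ⟨z, hRz, hLz⟩ : DRel y pp := drel_trans hreg hyD (drel_symm hreg hppD)
      obtain ⟨⟨c1, hc1⟩, -⟩ := (rrel_iff hreg).mp hRz
      obtain ⟨⟨c2, hc2⟩, -⟩ := (lrel_iff hreg).mp hLz
      have hyspt : y = c2 * (pp * c1) := by rw [hc1, hc2, mul_assoc]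
      obtain ⟨w, hw⟩ := stab hpy hyspt
      have hxpp : RRel x pp := by
        rw [rrel_iff hreg]
        exact ⟨⟨w * v, by rw [hyv, hw, mul_assoc]⟩, ⟨u, hxu⟩⟩
      exact ⟨x, hxY, r_eq_of_rrel_proj hinv hanti hreg hpps hpp2 hxpp⟩
    let f : S → S := fun pp => if h : pp ∈ Pset then (hfind pp h).choose else pp
    have hfY : ∀ pp ∈ Pset, f pp ∈ (Y : Set S) := by
      intro pp h
      simp only [f, dif_pos h]
      exact (hfind pp h).choose_spec.1
    have hfr : ∀ pp ∈ Pset, (f pp) * star (f pp) = pp := by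
      intro pp h
      simp only [f, dif_pos h]
      exact (hfind pp h).choose_spec.2
    have hinjOn : Set.InjOn f Pset := by
      intro pp hp qq hq h
      rw [← hfr pp hp, ← hfr qq hq, h]
    calc n = Pset.ncard := hn
    _ = (f '' Pset).ncard := (Set.ncard_image_of_injOn hinjOn).symm
    _ ≤ (Y : Set S).ncard := Set.ncard_le_ncard
        (by rintro _ ⟨pp, hpp, rfl⟩; exact hfY pp hpp) (Y.finite_toSet)
    _ = Y.card := Set.ncard_coe_finset Y
    _ = k := hYcard
  show sgRank _ = n
  unfold sgRank
  exact le_antisymm (Nat.sInf_le hmem_n) (le_csInf ⟨n, hmem_n⟩ hlow)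
end

section
/- Let S be a finite regular *-semigroup, let D be a D-class of S, let T = ⟨D⟩ be the subsemigroup of S generated by D, and let P = P(S) ∩ D. If T is generated by its idempotents, then T = ⟨P⟩ and idrank(T) = rank(T) = |P|. -/
section Green

open Subsemigroup MulOpposite

variable {S : Type*} [Semigroup S]

def RLe (x y : S) : Prop := x = y ∨ ∃ u, x = y * u

def LLe (x y : S) : Prop := x = y ∨ ∃ u, x = u * y

/-- `x ∈ S y S`; in a regular semigroup this agrees with `x ∈ S¹ y S¹`. -/
def JLe (x y : S) : Prop := ∃ u v, x = u * y * v

def dClass (a : S) : Set S := {x | DRel x a}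

variable (S) in
def IsRegularSemigroup : Prop := ∀ x : S, ∃ x', x * x' * x = x

theorem RLe.trans {x y z : S} (hxy : RLe x y) (hyz : RLe y z) : RLe x z := by
  rcases hxy with rfl | ⟨u, rfl⟩
  · exact hyz
  rcases hyz with rfl | ⟨v, rfl⟩
  · exact Or.inr ⟨u, rfl⟩
  · exact Or.inr ⟨v * u, mul_assoc _ _ _⟩

theorem RLe.mul_right {x y : S} (h : RLe x y) (z : S) : RLe (x * z) y :=
  RLe.trans (Or.inr ⟨z, rfl⟩) h

theorem RRel.trans {x y z : S} (hxy : RRel x y) (hyz : RRel y z) : RRel x z :=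
  ⟨RLe.trans hxy.1 hyz.1, RLe.trans hyz.2 hxy.2⟩

theorem RRel.symm {x y : S} (h : RRel x y) : RRel y x := ⟨h.2, h.1⟩

theorem IsIdempotentElem.mul_eq_of_rLe {p q : S} (hq : IsIdempotentElem q) (h : RLe p q) :
    q * p = p := by
  rcases h with rfl | ⟨u, rfl⟩
  · exact hq.eq
  · rw [← mul_assoc, hq.eq]

theorem JLe.trans {x y z : S} : JLe x y → JLe y z → JLe x z
  | ⟨u, v, hx⟩, ⟨u', v', hy⟩ => ⟨u * u', v' * v, by rw [hx, hy]; simp only [mul_assoc]⟩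

theorem exists_rLe_of_mem_closure {X : Set S} {x : S} (hx : x ∈ closure X) :
    ∃ y ∈ X, RLe x y := by
  induction hx using closure_induction with
  | mem y hy => exact ⟨y, hy, Or.inl rfl⟩
  | mul x z _ _ ihx _ =>
    obtain ⟨y, hy, hxy⟩ := ihx
    exact ⟨y, hy, hxy.mul_right z⟩

theorem jLe_mul_right (hreg : IsRegularSemigroup S) (x u : S) : JLe (x * u) x := by
  obtain ⟨x', hx⟩ := hreg x
  exact ⟨x * x', u, by rw [hx]⟩

theorem jLe_mul_left (hreg : IsRegularSemigroup S) (u x : S) : JLe (u * x) x := by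
  obtain ⟨x', hx⟩ := hreg x
  refine ⟨u, x' * x, ?_⟩
  simp only [mul_assoc] at hx ⊢
  rw [hx]

theorem jLe_refl (hreg : IsRegularSemigroup S) (x : S) : JLe x x := by
  obtain ⟨x', hx⟩ := hreg x
  have h := jLe_mul_right hreg x (x' * x)
  rwa [← mul_assoc, hx] at h

theorem RLe.jLe (hreg : IsRegularSemigroup S) {x y : S} (h : RLe x y) : JLe x y := by
  rcases h with rfl | ⟨u, rfl⟩
  exacts [jLe_refl hreg x, jLe_mul_right hreg y u]

theorem LLe.jLe (hreg : IsRegularSemigroup S) {x y : S} (h : LLe x y) : JLe x y := by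
  rcases h with rfl | ⟨u, rfl⟩
  exacts [jLe_refl hreg x, jLe_mul_left hreg u y]

theorem DRel.jLe (hreg : IsRegularSemigroup S) {x a : S} (h : DRel x a) :
    JLe x a ∧ JLe a x := by
  obtain ⟨z, hxz, hza⟩ := h
  exact ⟨(RLe.jLe hreg hxz.1).trans (LLe.jLe hreg hza.1),
    (LLe.jLe hreg hza.2).trans (RLe.jLe hreg hxz.2)⟩

theorem jLe_of_mem_closure_dClass (hreg : IsRegularSemigroup S) {a b : S}
    (hb : b ∈ closure (dClass a)) : JLe b a := by
  induction hb using closure_induction with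
  | mem x hx => exact (hx.jLe hreg).1
  | mul x y _ _ ihx _ => exact (jLe_mul_right hreg x y).trans ihx

section Finite

variable [Finite S]

theorem exists_idempotent_of_finite {s : Set S} (hs : s.Nonempty)
    (hmul : ∀ x ∈ s, ∀ y ∈ s, x * y ∈ s) : ∃ e ∈ s, IsIdempotentElem e := by
  let _ : TopologicalSpace S := ⊥
  have : DiscreteTopology S := ⟨rfl⟩
  exact exists_idempotent_in_compact_subsemigroup (fun _ => continuous_of_discreteTopology)
    s hs s.toFinite.isCompact hmul

theorem stable_right {y c d : S} (h : y = c * y * d) : ∃ w, y = y * d * w := by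
  -- an idempotent `e ∈ d S¹` with `y ∈ S y e` satisfies `y e = y`
  let s : Set S := {x | RLe x d ∧ ∃ c', y = c' * y * x}
  obtain ⟨e, ⟨hed, c', hc'⟩, he⟩ : ∃ e ∈ s, IsIdempotentElem e := by
    refine exists_idempotent_of_finite ⟨d, Or.inl rfl, c, h⟩ ?_
    rintro x₁ ⟨hx₁, c₁, h₁⟩ x₂ ⟨-, c₂, h₂⟩
    refine ⟨hx₁.mul_right x₂, c₂ * c₁, ?_⟩
    calc y = c₂ * y * x₂ := h₂
      _ = c₂ * (c₁ * y * x₁) * x₂ := by rw [← h₁]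
      _ = c₂ * c₁ * y * (x₁ * x₂) := by simp only [mul_assoc]
  have hye : y * e = y := by
    calc y * e = c' * y * e * e := by rw [← hc']
      _ = c' * y * e := by rw [mul_assoc _ e e, he.eq]
      _ = y := hc'.symm
  rcases hed with rfl | ⟨w, rfl⟩
  · exact ⟨e, by rw [hye, hye]⟩
  · exact ⟨w, by rw [mul_assoc, hye]⟩

theorem stable_left {y c d : S} (h : y = c * y * d) : ∃ w, y = w * c * y := by
  have : Finite Sᵐᵒᵖ := .of_equiv S opEquiv
  obtain ⟨w, hw⟩ := stable_right (y := op y) (c := op d) (d := op c)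
    (by rw [mul_assoc, ← op_mul, ← op_mul, ← h])
  exact ⟨unop w, by simpa [mul_assoc] using congrArg unop hw⟩

theorem RLe.of_jLe {x y : S} (hxy : RLe x y) (hyx : JLe y x) : RLe y x := by
  rcases hxy with rfl | ⟨t, rfl⟩
  · exact Or.inl rfl
  obtain ⟨u, v, h⟩ := hyx
  obtain ⟨w, hw⟩ := stable_right (c := u) (d := t * v) (by simpa only [mul_assoc] using h)
  exact Or.inr ⟨v * w, hw.trans (by simp only [mul_assoc])⟩

theorem dRel_of_jLe {x a : S} (hxa : JLe x a) (hax : JLe a x) : DRel x a := by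
  obtain ⟨s, t, hx⟩ := hxa
  obtain ⟨u, v, ha⟩ := hax
  have hsa : s * a = s * u * (s * a) * (t * v) := by
    conv_lhs => rw [ha, hx]
    simp only [mul_assoc]
  have ha' : a = u * s * a * (t * v) := by
    conv_lhs => rw [ha, hx]
    simp only [mul_assoc]
  obtain ⟨w, hw⟩ := stable_right hsa
  obtain ⟨w', hw'⟩ := stable_left ha'
  refine ⟨s * a, ⟨Or.inr ⟨t, hx⟩, Or.inr ⟨v * w, ?_⟩⟩,
    ⟨Or.inr ⟨s, rfl⟩, Or.inr ⟨w' * u, ?_⟩⟩⟩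
  · rw [hx]
    simpa only [mul_assoc] using hw
  · simpa only [mul_assoc] using hw'

end Finite

end Green

section Star

open Subsemigroup

variable {S : Type*} [Semigroup S] [StarMul S]

def dClassProjections (a : S) : Set S := {p | IsStarProjection p ∧ DRel p a}

theorem IsStarProjection.eq_of_rRel {p q : S} (hp : IsStarProjection p)
    (hq : IsStarProjection q) (h : RRel p q) : p = q :=
  calc p = star (q * p) := by rw [hq.isIdempotentElem.mul_eq_of_rLe h.1, hp.isSelfAdjoint.star_eq]
    _ = p * q := by rw [star_mul, hp.isSelfAdjoint.star_eq, hq.isSelfAdjoint.star_eq]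
    _ = q := hp.isIdempotentElem.mul_eq_of_rLe h.2

theorem isRegularSemigroup_of_mul_star_mul (hreg : ∀ x : S, x * star x * x = x) :
    IsRegularSemigroup S :=
  fun x => ⟨star x, hreg x⟩

theorem isStarProjection_mul_star (hreg : ∀ x : S, x * star x * x = x) (x : S) :
    IsStarProjection (x * star x) :=
  isStarProjection_iff'.2 ⟨by rw [← mul_assoc, hreg], by rw [star_mul, star_star]⟩

theorem isStarProjection_star_mul (hreg : ∀ x : S, x * star x * x = x) (x : S) :
    IsStarProjection (star x * x) := by
  simpa using isStarProjection_mul_star hreg (star x)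

theorem mul_star_mul_star_mul_self (hreg : ∀ x : S, x * star x * x = x) {e : S}
    (he : IsIdempotentElem e) : e * star e * (star e * e) = e := by
  have hstar : star e * star e = star e := by rw [← star_mul, he.eq]
  calc e * star e * (star e * e) = e * (star e * star e) * e := by simp only [mul_assoc]
    _ = e := by rw [hstar, hreg]

section Finite

variable [Finite S]

theorem DRel.mul_star (hreg : ∀ x : S, x * star x * x = x) {x a : S} (h : DRel x a) :
    DRel (x * star x) a := by
  have hS := isRegularSemigroup_of_mul_star_mul hreg
  obtain ⟨hxa, hax⟩ := h.jLe hS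
  exact dRel_of_jLe ((jLe_mul_right hS x _).trans hxa)
    (hax.trans (RLe.jLe hS (Or.inr ⟨x, (hreg x).symm⟩)))

theorem DRel.star_mul (hreg : ∀ x : S, x * star x * x = x) {x a : S} (h : DRel x a) :
    DRel (star x * x) a := by
  have hS := isRegularSemigroup_of_mul_star_mul hreg
  obtain ⟨hxa, hax⟩ := h.jLe hS
  exact dRel_of_jLe ((jLe_mul_left hS _ x).trans hxa)
    (hax.trans (LLe.jLe hS (Or.inr ⟨x, by rw [← mul_assoc, hreg]⟩)))

theorem mem_closure_dClassProjections_of_idem (hreg : ∀ x : S, x * star x * x = x) {a e : S}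
    (he : IsIdempotentElem e) (hea : DRel e a) : e ∈ closure (dClassProjections a) := by
  have h : e * star e * (star e * e) ∈ closure (dClassProjections a) :=
    mul_mem (subset_closure ⟨isStarProjection_mul_star hreg e, hea.mul_star hreg⟩)
      (subset_closure ⟨isStarProjection_star_mul hreg e, hea.star_mul hreg⟩)
  rwa [mul_star_mul_star_mul_self hreg he] at h

theorem mem_closure_dClassProjections_of_mem_closure_idempotents
    (hreg : ∀ x : S, x * star x * x = x) {a y : S}
    (hy : y ∈ closure {e | e ∈ closure (dClass a) ∧ IsIdempotentElem e}) (hya : DRel y a) :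
    y ∈ closure (dClassProjections a) := by
  have hS := isRegularSemigroup_of_mul_star_mul hreg
  induction hy using closure_induction with
  | mem e he => exact mem_closure_dClassProjections_of_idem hreg he.2 hya
  | mul y z hy hz ihy ihz =>
    have hET {x : S} (hx : x ∈ closure {e | e ∈ closure (dClass a) ∧ IsIdempotentElem e}) :
        JLe x a :=
      jLe_of_mem_closure_dClass hS (closure_le.2 (fun e he => he.1) hx)
    have hayz := (hya.jLe hS).2
    exact mul_mem (ihy (dRel_of_jLe (hET hy) (hayz.trans (jLe_mul_right hS y z))))
      (ihz (dRel_of_jLe (hET hz) (hayz.trans (jLe_mul_left hS y z))))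

theorem closure_dClassProjections (hreg : ∀ x : S, x * star x * x = x) {a : S}
    (hE : closure {e | e ∈ closure (dClass a) ∧ IsIdempotentElem e} = closure (dClass a)) :
    closure (dClassProjections a) = closure (dClass a) :=
  le_antisymm (closure_mono fun _ hp => hp.2) (closure_le.2 fun _ hx =>
    mem_closure_dClassProjections_of_mem_closure_idempotents hreg (hE.ge (subset_closure hx)) hx)

theorem ncard_dClassProjections_le (hreg : ∀ x : S, x * star x * x = x) {a : S}
    {X : Finset S} (hX : closure (X : Set S) = closure (dClass a)) :
    (dClassProjections a).ncard ≤ X.card := by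
  have hS := isRegularSemigroup_of_mul_star_mul hreg
  have hrep : ∀ p ∈ dClassProjections a, ∃ y ∈ X, RRel p y := by
    intro p hp
    have hpX : p ∈ closure (X : Set S) := hX ▸ Subsemigroup.subset_closure hp.2
    obtain ⟨y, hyX, hpy⟩ := exists_rLe_of_mem_closure hpX
    have hyT : y ∈ closure (dClass a) := hX ▸ Subsemigroup.subset_closure hyX
    exact ⟨y, hyX, hpy, hpy.of_jLe ((jLe_of_mem_closure_dClass hS hyT).trans (hp.2.jLe hS).2)⟩
  choose! f hfX hfR using hrep
  calc (dClassProjections a).ncard ≤ (X : Set S).ncard :=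
        Set.ncard_le_ncard_of_injOn f hfX (fun p hp q hq hpq =>
          hp.1.eq_of_rRel hq.1 ((hfR p hp).trans (hpq ▸ (hfR q hq).symm))) X.finite_toSet
    _ = X.card := Set.ncard_coe_finset X

end Finite

end Star

section Rank

open Subsemigroup

variable {S : Type*} [Semigroup S] {T : Subsemigroup S} {P : Set S}

theorem sgRank_eq_ncard (hP : P.Finite) (hgen : closure P = T)
    (hmin : ∀ X : Finset S, closure (X : Set S) = T → P.ncard ≤ X.card) :
    sgRank T = P.ncard := by
  obtain ⟨P, rfl⟩ := hP.exists_finset_coe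
  rw [Set.ncard_coe_finset] at hmin ⊢
  exact le_antisymm (Nat.sInf_le ⟨P, rfl, hgen⟩)
    (le_csInf ⟨_, P, rfl, hgen⟩ fun _ ⟨X, hX, hgenX⟩ => hX ▸ hmin X hgenX)

theorem sgIdRank_eq_ncard (hP : P.Finite) (hidem : ∀ p ∈ P, IsIdempotentElem p)
    (hgen : closure P = T)
    (hmin : ∀ X : Finset S, (∀ x ∈ X, IsIdempotentElem x) → closure (X : Set S) = T →
      P.ncard ≤ X.card) :
    sgIdRank T = P.ncard := by
  obtain ⟨P, rfl⟩ := hP.exists_finset_coe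
  rw [Set.ncard_coe_finset] at hmin ⊢
  exact le_antisymm (Nat.sInf_le ⟨P, rfl, hidem, hgen⟩)
    (le_csInf ⟨_, P, rfl, hidem, hgen⟩
      fun _ ⟨X, hX, hidemX, hgenX⟩ => hX ▸ hmin X hidemX hgenX)

end Rank

/-- Let `S` be a finite regular *-semigroup, `D` the D-class
of an element `a`, `T = ⟨D⟩` and `P = P(S) ∩ D`.  If `T` is generated by its
idempotents, then `T = ⟨P⟩` and `idrank T = rank T = |P|`. -/
theorem idrank_genDClass {S : Type*} [Semigroup S] [Fintype S] (star : S → S)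
    (hinv : ∀ x : S, star (star x) = x)
    (hanti : ∀ x y : S, star (x * y) = star y * star x)
    (hreg : ∀ x : S, x * star x * x = x)
    (a : S)
    (hE : Subsemigroup.closure
        {e : S | e ∈ Subsemigroup.closure {x : S | DRel x a} ∧ e * e = e} =
      Subsemigroup.closure {x : S | DRel x a}) :
    Subsemigroup.closure {p : S | (star p = p ∧ p * p = p) ∧ DRel p a} =
      Subsemigroup.closure {x : S | DRel x a} ∧
    sgIdRank (Subsemigroup.closure {x : S | DRel x a}) =
      Set.ncard {p : S | (star p = p ∧ p * p = p) ∧ DRel p a} ∧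
    sgRank (Subsemigroup.closure {x : S | DRel x a}) =
      Set.ncard {p : S | (star p = p ∧ p * p = p) ∧ DRel p a} := by
  let _ : StarMul S := { star, star_involutive := hinv, star_mul := hanti }
  have hP : {p : S | (star p = p ∧ p * p = p) ∧ DRel p a} = dClassProjections a := by
    ext p
    exact and_congr_left' (and_comm.trans isStarProjection_iff'.symm)
  rw [hP]
  have hgen : Subsemigroup.closure (dClassProjections a) = Subsemigroup.closure (dClass a) :=
    closure_dClassProjections hreg hE
  have hmin (X : Finset S)
      (hX : Subsemigroup.closure (X : Set S) = Subsemigroup.closure (dClass a)) :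
      (dClassProjections a).ncard ≤ X.card :=
    ncard_dClassProjections_le hreg hX
  exact ⟨hgen,
    sgIdRank_eq_ncard (Set.toFinite _) (fun p hp => hp.1.isIdempotentElem) hgen fun X _ => hmin X,
    sgRank_eq_ncard (Set.toFinite _) hgen hmin⟩
end

section
/- For 0 ≤ r ≤ n, the number of projections in D_r(PB_n) equals C(n,r)·a(n−r), where a(0) = a(1) = 1 and a(m) = a(m−1) + (m−1)·a(m−2) for m ≥ 2. -/
/-!
Partial Brauer diagrams on `n` points are formalized as set partitions
(equivalence relations, i.e. `Setoid`s) of the vertex set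
`{1,…,n} ∪ {1',…,n'}`, encoded as `Fin n ⊕ Fin n`
(`Sum.inl i` is the upper vertex `i`, `Sum.inr i` is the lower vertex `i'`),
all of whose blocks have size at most 2.  The product of two diagrams is
defined via connectivity (paths) in the product graph, and the involution `*`
by interchanging the two rows of vertices.
-/

noncomputable section

open scoped Classical

/-- Vertices of a diagram on `n` points. -/
abbrev PBV (n : ℕ) := Fin n ⊕ Fin n

/-- A "diagram candidate": an arbitrary set partition of the vertices. -/
abbrev Dgm (n : ℕ) := Setoid (PBV n)

/-- The equivalence relation ("joined by a path") generated by a relation. -/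
inductive RGen {V : Type*} (r : V → V → Prop) : V → V → Prop
  | rel {x y : V} : r x y → RGen r x y
  | refl (x : V) : RGen r x x
  | symm {x y : V} : RGen r x y → RGen r y x
  | trans {x y z : V} : RGen r x y → RGen r y z → RGen r x z

namespace Dgm

variable {n : ℕ}

/-- Vertices of the product graph: top, middle and bottom rows. -/
abbrev V3 (n : ℕ) := Fin n ⊕ (Fin n ⊕ Fin n)

/-- The first factor occupies the top and middle rows of the product graph. -/
def topMid : PBV n → V3 n
  | Sum.inl i => Sum.inl i
  | Sum.inr i => Sum.inr (Sum.inl i)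

/-- The second factor occupies the middle and bottom rows of the product graph. -/
def midBot : PBV n → V3 n
  | Sum.inl i => Sum.inr (Sum.inl i)
  | Sum.inr i => Sum.inr (Sum.inr i)

/-- The product diagram occupies the top and bottom rows of the product graph. -/
def topBot : PBV n → V3 n
  | Sum.inl i => Sum.inl i
  | Sum.inr i => Sum.inr (Sum.inr i)

/-- The edges of the product graph `Γ(α, β)`. -/
def prodEdges (α β : Dgm n) (x y : V3 n) : Prop :=
  (∃ a b : PBV n, α.r a b ∧ x = topMid a ∧ y = topMid b) ∨
  (∃ a b : PBV n, β.r a b ∧ x = midBot a ∧ y = midBot b)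

/-- The product of two diagrams: two vertices lie in the same block of `α β`
iff they are joined by a path in the product graph `Γ(α, β)`. -/
def pmul (α β : Dgm n) : Dgm n where
  r x y := RGen (prodEdges α β) (topBot x) (topBot y)
  iseqv := ⟨fun _ => RGen.refl _, fun h => h.symm, fun h₁ h₂ => h₁.trans h₂⟩

/-- Interchanging the upper and the lower vertices. -/
def swapUD : PBV n → PBV n
  | Sum.inl i => Sum.inr i
  | Sum.inr i => Sum.inl i

/-- The involution `α ↦ α*` (reflection in a horizontal axis). -/
def pstar (α : Dgm n) : Dgm n := Setoid.comap swapUD α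

/-- All blocks of `α` have size at most 2. -/
def IsPB (α : Dgm n) : Prop :=
  ∀ x y z : PBV n, α.r x y → α.r x z → x = y ∨ x = z ∨ y = z

/-- The partial Brauer monoid `PB_n` (as a set of diagrams). -/
def PBset (n : ℕ) : Set (Dgm n) := {α | IsPB α}

/-- The position of a vertex in the linear order `1 < 2 < ⋯ < n < n' < ⋯ < 1'`. -/
def vpos : PBV n → ℕ
  | Sum.inl i => (i : ℕ)
  | Sum.inr i => 2 * n - 1 - (i : ℕ)

/-- Planarity: no two blocks cross in the order `1 < ⋯ < n < n' < ⋯ < 1'`. -/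
def IsPlanar (α : Dgm n) : Prop :=
  ∀ a b c d : PBV n, α.r a b → α.r c d →
    vpos a < vpos c → vpos c < vpos b → vpos b < vpos d → False

/-- The Motzkin monoid `M_n` (as a set of diagrams). -/
def Mset (n : ℕ) : Set (Dgm n) := {α | IsPB α ∧ IsPlanar α}

/-- The domain of `α`: upper points lying in a transversal block. -/
def domSet (α : Dgm n) : Set (Fin n) := {i | ∃ j, α.r (Sum.inl i) (Sum.inr j)}

/-- The codomain of `α`: lower points lying in a transversal block. -/
def codomSet (α : Dgm n) : Set (Fin n) := {i | ∃ j, α.r (Sum.inr i) (Sum.inl j)}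

/-- The rank of a diagram: the number of its transversal blocks (for a diagram
with blocks of size at most 2, each transversal block contains exactly one
upper point, so this is the size of the domain). -/
def prank (α : Dgm n) : ℕ := (domSet α).ncard

/-- `α` is an idempotent. -/
def IsIdpt (α : Dgm n) : Prop := pmul α α = α

/-- `α` is a projection. -/
def IsProj (α : Dgm n) : Prop := pmul α α = α ∧ pstar α = α

/-- The D-class `D_r(PB_n)`. -/
def DPB (n r : ℕ) : Set (Dgm n) := {α | α ∈ PBset n ∧ prank α = r}

/-- The ideal `I_r(PB_n)`. -/
def IPB (n r : ℕ) : Set (Dgm n) := {α | α ∈ PBset n ∧ prank α ≤ r}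

/-- The D-class `D_r(M_n)`. -/
def DM (n r : ℕ) : Set (Dgm n) := {α | α ∈ Mset n ∧ prank α = r}

/-- The ideal `I_r(M_n)`. -/
def IM (n r : ℕ) : Set (Dgm n) := {α | α ∈ Mset n ∧ prank α ≤ r}

end Dgm

/-- Membership in the closure of a subset under a binary operation. -/
inductive MClo {γ : Type*} (m : γ → γ → γ) (X : Set γ) : γ → Prop
  | base {x : γ} : x ∈ X → MClo m X x
  | mul {x y : γ} : MClo m X x → MClo m X y → MClo m X (m x y)

/-- The subsemigroup `⟨X⟩` generated by the subset `X`. -/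
def genSet {γ : Type*} (m : γ → γ → γ) (X : Set γ) : Set γ := {x | MClo m X x}

/-- The rank of `T`: the least size of a generating set. -/
noncomputable def rnk {γ : Type*} (m : γ → γ → γ) (T : Set γ) : ℕ :=
  sInf {k | ∃ X : Finset γ, X.card = k ∧ genSet m ↑X = T}

/-- The idempotent rank of `T`: the least size of a generating set consisting
of idempotents. -/
noncomputable def idrnk {γ : Type*} (m : γ → γ → γ) (T : Set γ) : ℕ :=
  sInf {k | ∃ X : Finset γ, X.card = k ∧ (∀ x ∈ X, m x x = x) ∧ genSet m ↑X = T}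

/-- `T` is idempotent-generated. -/
def IdptGen {γ : Type*} (m : γ → γ → γ) (T : Set γ) : Prop :=
  genSet m {x ∈ T | m x x = x} = T

open Dgm
/-- `a(m)`: `a(0) = a(1) = 1` and `a(m) = a(m-1) + (m-1)·a(m-2)`. -/
def aSeq : ℕ → ℕ
  | 0 => 1
  | 1 => 1
  | (m + 2) => aSeq (m + 1) + (m + 1) * aSeq m

/-- The double factorial `k!!`, with the convention `k!! = 0` for even `k ≥ 0`. -/
def oddDF : ℕ → ℕ
  | 0 => 0
  | 1 => 1
  | (k + 2) => (k + 2) * oddDF k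

namespace Dgm

variable {n : ℕ}

/-- `{x}` is a singleton upper block of `α`. -/
def UpperSingleton (α : Dgm n) (x : Fin n) : Prop :=
  ∀ y : PBV n, α.r (Sum.inl x) y → y = Sum.inl x

/-- `{x'}` is a singleton lower block of `α`. -/
def LowerSingleton (α : Dgm n) (x : Fin n) : Prop :=
  ∀ y : PBV n, α.r (Sum.inr x) y → y = Sum.inr x

/-- The upper point `x` is nested: some upper block `{u,v}` has `u < x < v`. -/
def UpperNested (α : Dgm n) (x : Fin n) : Prop :=
  ∃ u v : Fin n, α.r (Sum.inl u) (Sum.inl v) ∧ u < x ∧ x < v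

/-- The lower point `x'` is nested: some lower block `{u',v'}` has `u < x < v`. -/
def LowerNested (α : Dgm n) (x : Fin n) : Prop :=
  ∃ u v : Fin n, α.r (Sum.inr u) (Sum.inr v) ∧ u < x ∧ x < v

/-- `α` has no unnested singleton (upper or lower) block. -/
def NoUnnestedSingleton (α : Dgm n) : Prop :=
  (∀ x, UpperSingleton α x → UpperNested α x) ∧
  (∀ x, LowerSingleton α x → LowerNested α x)

/-- A chain of `d` nested upper hooks of `α` around the upper point `x`:
`u_{d-1} < ⋯ < u_0 < x < v_0 < ⋯ < v_{d-1}` with each `{u_i, v_i}` a block.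
The singleton upper block `{x}` has nesting depth at most `k` iff there is no
such chain of length `k + 1`. -/
def UpperHookChain (α : Dgm n) (x : Fin n) (d : ℕ) : Prop :=
  ∃ u v : Fin d → Fin n,
    (∀ i, α.r (Sum.inl (u i)) (Sum.inl (v i))) ∧
    (∀ i, u i < x ∧ x < v i) ∧ StrictAnti u ∧ StrictMono v

/-- A chain of `d` nested lower hooks of `α` around the lower point `x'`. -/
def LowerHookChain (α : Dgm n) (x : Fin n) (d : ℕ) : Prop :=
  ∃ u v : Fin d → Fin n,
    (∀ i, α.r (Sum.inr (u i)) (Sum.inr (v i))) ∧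
    (∀ i, u i < x ∧ x < v i) ∧ StrictAnti u ∧ StrictMono v

/-- `λ_A`: the planar diagram joining the `k`-th smallest element of `A`
(upper) to `k` (lower), all other blocks being singletons. -/
def lamd (A : Finset (Fin n)) : Dgm n :=
  Setoid.ker (fun x : PBV n =>
    match x with
    | Sum.inl a =>
        if ha : a ∈ A then
          (Sum.inr (((A.orderIsoOfFin rfl).symm ⟨a, ha⟩ : Fin A.card) : ℕ) : ℕ ⊕ ℕ)
        else Sum.inl (a : ℕ)
    | Sum.inr j => Sum.inr (j : ℕ))

/-- `ρ_A = (λ_A)*`. -/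
def rhod (A : Finset (Fin n)) : Dgm n := pstar (lamd A)

/-- The diagram whose 2-element blocks are exactly `{i, (π i)'}` for `i < r`. -/
def permDgm (n r : ℕ) (π : Equiv.Perm (Fin r)) : Dgm n :=
  Setoid.ker (fun x : PBV n =>
    match x with
    | Sum.inl a =>
        if h : (a : ℕ) < r then (Sum.inr ((π ⟨(a : ℕ), h⟩ : Fin r) : ℕ) : ℕ ⊕ ℕ)
        else Sum.inl (a : ℕ)
    | Sum.inr j => Sum.inr (j : ℕ))

/-- The set `S_{[r]} ⊆ PB_n`. -/
def SBr (n r : ℕ) : Set (Dgm n) := {γ | ∃ π : Equiv.Perm (Fin r), γ = permDgm n r π}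

/-- The domain of `α` as a `Finset`. -/
def domFinset (α : Dgm n) : Finset (Fin n) :=
  Finset.univ.filter fun i => i ∈ domSet α

/-- The codomain of `α` as a `Finset`. -/
def codomFinset (α : Dgm n) : Finset (Fin n) :=
  Finset.univ.filter fun i => i ∈ codomSet α

/-- `A ⊆ {1,…,n}` is cosparse: its complement contains no two consecutive
elements. -/
def CosparseS (A : Set (Fin n)) : Prop :=
  ∀ i j : Fin n, i ∉ A → j ∉ A → (j : ℕ) ≠ (i : ℕ) + 1

/-- `id_A`: the diagram with blocks `{a, a'}` for `a ∈ A`, all other blocks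
being singletons. -/
def idd (A : Set (Fin n)) : Dgm n :=
  Setoid.ker (fun x : PBV n =>
    match x with
    | Sum.inl a => if a ∈ A then (Sum.inr (a : ℕ) : ℕ ⊕ ℕ) else Sum.inl (a : ℕ)
    | Sum.inr j => Sum.inr (j : ℕ))

end Dgm

/-!
A diagram whose blocks have at most two points is the same thing as an involution of the
vertex set, sending each point to the other point of its block. For a projection `α`,
star-invariance makes the lower blocks mirror the upper ones, and idempotency makes every
transversal vertical: a transversal `{i, j'}` and its mirror `{j, i'}` compose to `{i, i'}`,
which must be the block of `i`. Conversely such a diagram is idempotent, since in the product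
graph of `α` with itself the middle row may be identified with the top row. So a projection
of rank `r` is the same as its set `T` of `r` transversal points together with an involution
of the complement of `T` (the upper blocks). The involutions of an `m`-set number `a(m)`:
a chosen point is either fixed or paired with one of the other `m - 1` points.
-/

open Finset Function

lemma aSeq_succ (m : ℕ) : aSeq (m + 1) = aSeq m + m * aSeq (m - 1) := by
  cases m <;> rfl

lemma Function.Involutive.swap_comp {α : Type*} [DecidableEq α] {g : α → α}
    (hg : Involutive g) {a b : α} (hab : Equiv.swap (g a) (g b) = Equiv.swap a b) :
    Involutive (Equiv.swap a b ∘ g) := by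
  intro x
  simp only [comp_apply, ← hg.injective.swap_apply, hab, hg x, Equiv.swap_apply_self]

section Involutions

variable {α : Type*} [Fintype α] [DecidableEq α]

def involutionsOn (s : Finset α) : Finset (α → α) :=
  univ.filter fun g => Involutive g ∧ ∀ x ∉ s, g x = x

lemma mem_involutionsOn {s : Finset α} {g : α → α} :
    g ∈ involutionsOn s ↔ Involutive g ∧ ∀ x ∉ s, g x = x := by
  simp [involutionsOn]

lemma involutionsOn_empty : involutionsOn (∅ : Finset α) = {id} := by
  ext g
  simp only [mem_involutionsOn, notMem_empty, not_false_eq_true, forall_const,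
    mem_singleton, funext_iff, id_eq]
  exact ⟨And.right, fun h => ⟨fun x => by rw [h, h], h⟩⟩

lemma apply_mem_of_mem_involutionsOn {s : Finset α} {g : α → α} (hg : g ∈ involutionsOn s)
    {x : α} (hx : x ∈ s) : g x ∈ s := by
  obtain ⟨hinv, hfix⟩ := mem_involutionsOn.1 hg
  by_contra h
  exact h (((hfix _ h).symm.trans (hinv x)).symm ▸ hx)

lemma filter_involutionsOn_apply_self (s : Finset α) (a : α) :
    (involutionsOn s).filter (fun g => g a = a) = involutionsOn (s.erase a) := by
  ext g
  simp only [mem_filter, mem_involutionsOn, mem_erase, not_and_or, not_not, ne_eq]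
  constructor
  · rintro ⟨⟨hg, hs⟩, ha⟩
    refine ⟨hg, fun x hx => ?_⟩
    rcases hx with rfl | hx
    · exact ha
    · exact hs x hx
  · rintro ⟨hg, hs⟩
    exact ⟨⟨hg, fun x hx => hs x (Or.inr hx)⟩, hs a (Or.inl rfl)⟩

lemma card_filter_involutionsOn_apply_eq {s : Finset α} {a b : α} (ha : a ∈ s) (hb : b ∈ s)
    (hba : b ≠ a) :
    #((involutionsOn s).filter (fun g => g a = b)) = #(involutionsOn ((s.erase a).erase b)) := by
  have hswap : ∀ g : α → α, Equiv.swap a b ∘ (Equiv.swap a b ∘ g) = g := fun g =>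
    funext fun x => Equiv.swap_apply_self a b (g x)
  refine card_nbij' (Equiv.swap a b ∘ ·) (Equiv.swap a b ∘ ·) ?_ ?_ (fun g _ => hswap g)
    (fun g _ => hswap g)
  · intro g hg
    simp only [coe_filter, mem_involutionsOn, Set.mem_ofPred_eq] at hg
    obtain ⟨⟨hg, hs⟩, hgab⟩ := hg
    have hgba : g b = a := by rw [← hgab, hg]
    simp only [mem_coe, mem_involutionsOn, mem_erase, not_and_or, not_not, ne_eq]
    refine ⟨hg.swap_comp (by rw [hgab, hgba, Equiv.swap_comm]), fun x hx => ?_⟩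
    rcases hx with rfl | rfl | hx
    · simp [hgba]
    · simp [hgab]
    · rw [comp_apply, hs x hx, Equiv.swap_apply_of_ne_of_ne (ne_of_mem_of_not_mem ha hx).symm
        (ne_of_mem_of_not_mem hb hx).symm]
  · intro h hh
    simp only [mem_coe, mem_involutionsOn, mem_erase, not_and_or, not_not, ne_eq] at hh
    obtain ⟨hh, hs⟩ := hh
    have hha : h a = a := hs a (Or.inr (Or.inl rfl))
    have hhb : h b = b := hs b (Or.inl rfl)
    simp only [coe_filter, mem_involutionsOn, Set.mem_ofPred_eq, comp_apply, hha,
      Equiv.swap_apply_left, and_true]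
    refine ⟨hh.swap_comp (by rw [hha, hhb]), fun x hx => ?_⟩
    rw [hs x (Or.inr (Or.inr hx)), Equiv.swap_apply_of_ne_of_ne
      (ne_of_mem_of_not_mem ha hx).symm (ne_of_mem_of_not_mem hb hx).symm]

theorem card_involutionsOn (s : Finset α) : #(involutionsOn s) = aSeq #s := by
  induction s using Finset.strongInduction with
  | H s ih =>
  obtain rfl | ⟨a, ha⟩ := s.eq_empty_or_nonempty
  · simp [involutionsOn_empty, aSeq]
  obtain ⟨m, hm⟩ : ∃ m, #s = m + 1 := Nat.exists_eq_add_one.2 (card_pos.2 ⟨a, ha⟩)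
  have hfib : ∀ b ∈ s.erase a, #((involutionsOn s).filter (· a = b)) = aSeq (m - 1) := by
    intro b hb
    obtain ⟨hba, hbs⟩ := mem_erase.1 hb
    rw [card_filter_involutionsOn_apply_eq ha hbs hba,
      ih _ ((erase_ssubset hb).trans (erase_ssubset ha)), card_erase_of_mem hb,
      card_erase_of_mem ha, hm]
    rfl
  rw [card_eq_sum_card_fiberwise fun g hg => apply_mem_of_mem_involutionsOn hg ha,
    ← add_sum_erase s _ ha, filter_involutionsOn_apply_self, ih _ (erase_ssubset ha),
    sum_congr rfl hfib, sum_const, card_erase_of_mem ha, hm, smul_eq_mul, aSeq_succ]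
  rfl

end Involutions

def Setoid.pairing {V : Type*} (σ : V → V) : Setoid V :=
  Setoid.ker fun x => ({x, σ x} : Set V)

lemma Setoid.pairing_rel {V : Type*} {σ : V → V} (hσ : Involutive σ) {x y : V} :
    (Setoid.pairing σ).r x y ↔ y = x ∨ y = σ x := by
  change ({x, σ x} : Set V) = {y, σ y} ↔ _
  refine ⟨fun h => show y ∈ ({x, σ x} : Set V) from h ▸ Set.mem_insert y _, ?_⟩
  rintro (rfl | rfl)
  · rfl
  · rw [hσ x, Set.pair_comm]

lemma RGen.setoid_rel {V W : Type*} {r : V → V → Prop} {s : Setoid W} {f : V → W}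
    (hf : ∀ x y, r x y → s.r (f x) (f y)) {x y : V} (h : RGen r x y) : s.r (f x) (f y) := by
  induction h with
  | rel h => exact hf _ _ h
  | refl => exact s.refl' _
  | symm _ ih => exact s.symm' ih
  | trans _ _ ih₁ ih₂ => exact s.trans' ih₁ ih₂

namespace Dgm

variable {n : ℕ}

lemma rel_swapUD_iff {α : Dgm n} (hstar : pstar α = α) {x y : PBV n} :
    α.r (swapUD x) (swapUD y) ↔ α.r x y := by
  conv_rhs => rw [← hstar]
  rfl

lemma swapUD_involutive : Involutive (swapUD : PBV n → PBV n) := by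
  rintro (i | i) <;> rfl

lemma isPB_pairing {σ : PBV n → PBV n} (hσ : Involutive σ) : IsPB (Setoid.pairing σ) := by
  intro x y z hy hz
  rw [Setoid.pairing_rel hσ] at hy hz
  rcases hy with rfl | rfl <;> rcases hz with rfl | rfl <;> simp

lemma pstar_pairing {σ : PBV n → PBV n} (hσ : Involutive σ)
    (hswap : ∀ x, σ (swapUD x) = swapUD (σ x)) :
    pstar (Setoid.pairing σ) = Setoid.pairing σ := by
  ext x y
  change (Setoid.pairing σ).r (swapUD x) (swapUD y) ↔ (Setoid.pairing σ).r x y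
  rw [Setoid.pairing_rel hσ, Setoid.pairing_rel hσ, hswap, swapUD_involutive.injective.eq_iff,
    swapUD_involutive.injective.eq_iff]

def partner (α : Dgm n) (x : PBV n) : PBV n :=
  if h : ∃ y, y ≠ x ∧ α.r x y then h.choose else x

section partner

variable {α : Dgm n} (hα : IsPB α)
include hα

lemma rel_iff_partner {x y : PBV n} : α.r x y ↔ y = x ∨ y = partner α x := by
  unfold partner
  split_ifs with h
  · refine ⟨fun hxy => ?_, ?_⟩
    · rcases hα x y _ hxy h.choose_spec.2 with hc | hc | hc
      · exact Or.inl hc.symm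
      · exact absurd hc.symm h.choose_spec.1
      · exact Or.inr hc
    · rintro (rfl | rfl)
      · exact α.refl' _
      · exact h.choose_spec.2
  · push Not at h
    refine ⟨fun hxy => Or.inl (by_contra fun hne => h y hne hxy), ?_⟩
    rintro (rfl | rfl) <;> exact α.refl' _

lemma rel_partner (x : PBV n) : α.r x (partner α x) :=
  (rel_iff_partner hα).2 (Or.inr rfl)

lemma partner_involutive : Involutive (partner α) := by
  intro x
  rcases (rel_iff_partner hα).1 (α.symm' (rel_partner hα x)) with h | h
  · rw [← h, ← h]
  · exact h.symm

lemma pairing_partner : Setoid.pairing (partner α) = α := by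
  ext x y
  rw [Setoid.pairing_rel (partner_involutive hα), rel_iff_partner hα]

lemma partner_swapUD (hstar : pstar α = α) (x : PBV n) :
    partner α (swapUD x) = swapUD (partner α x) := by
  have h1 : α.r x (swapUD (partner α (swapUD x))) :=
    (rel_swapUD_iff hstar).1 (by rw [swapUD_involutive]; exact rel_partner hα _)
  rcases (rel_iff_partner hα).1 h1 with h | h
  · have hfix : partner α (swapUD x) = swapUD x := by
      simpa only [swapUD_involutive _] using congrArg swapUD h
    rcases (rel_iff_partner hα).1 ((rel_swapUD_iff hstar).2 (rel_partner hα x)) with h2 | h2 <;>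
      rw [h2, hfix]
  · rw [← h, swapUD_involutive]

end partner

lemma partner_pairing {σ : PBV n → PBV n} (hσ : Involutive σ) :
    partner (Setoid.pairing σ) = σ := by
  funext x
  have hPB := isPB_pairing hσ
  rcases (rel_iff_partner hPB).1 ((Setoid.pairing_rel hσ).2 (Or.inr rfl)) with h | h
  · rcases (Setoid.pairing_rel hσ).1 (rel_partner hPB x) with h' | h' <;> rw [h', h]
  · exact h.symm

def collapseMid : V3 n → PBV n
  | Sum.inl i => Sum.inl i
  | Sum.inr (Sum.inl i) => Sum.inl i
  | Sum.inr (Sum.inr i) => Sum.inr i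

lemma pmul_rel_inl_inr {α β : Dgm n} {i j k : Fin n} (h₁ : α.r (Sum.inl i) (Sum.inr j))
    (h₂ : β.r (Sum.inl j) (Sum.inr k)) : (pmul α β).r (Sum.inl i) (Sum.inr k) :=
  RGen.trans (RGen.rel (Or.inl ⟨_, _, h₁, rfl, rfl⟩))
    (RGen.rel (Or.inr ⟨_, _, h₂, rfl, rfl⟩))

section projection

variable {α : Dgm n}

lemma pmul_self_of_vertical (hstar : pstar α = α)
    (hvert : ∀ i j, α.r (Sum.inl i) (Sum.inr j) → j = i) : pmul α α = α := by
  ext x y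
  constructor
  · -- identifying the middle row with the top row maps every edge of `Γ(α, α)` into `α`
    have hedge : ∀ u v, prodEdges α α u v → α.r (collapseMid u) (collapseMid v) := by
      rintro _ _ (⟨a, b, hab, rfl, rfl⟩ | ⟨a, b, hab, rfl, rfl⟩)
      · rcases a with i | i <;> rcases b with j | j
        · exact hab
        · obtain rfl := hvert i j hab
          exact α.refl' _
        · obtain rfl := hvert j i (α.symm' hab)
          exact α.refl' _
        · exact (rel_swapUD_iff hstar).2 hab
      · rcases a with i | i <;> rcases b with j | j <;> exact hab
    intro h
    rcases x with i | i <;> rcases y with j | j <;> exact RGen.setoid_rel hedge h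
  · intro h
    rcases x with i | i <;> rcases y with j | j
    · exact RGen.rel (Or.inl ⟨_, _, h, rfl, rfl⟩)
    · obtain rfl := hvert i j h
      exact pmul_rel_inl_inr h h
    · obtain rfl := hvert j i (α.symm' h)
      exact (pmul α α).symm' (pmul_rel_inl_inr (α.symm' h) (α.symm' h))
    · exact RGen.rel (Or.inr ⟨_, _, h, rfl, rfl⟩)

lemma vertical_of_isProj (hα : IsPB α) (hproj : IsProj α) {i j : Fin n}
    (h : α.r (Sum.inl i) (Sum.inr j)) : j = i := by
  have h' : α.r (Sum.inl j) (Sum.inr i) := α.symm' ((rel_swapUD_iff hproj.2).2 h)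
  have hii : (pmul α α).r (Sum.inl i) (Sum.inr i) := pmul_rel_inl_inr h h'
  rw [hproj.1] at hii
  rcases hα _ _ _ h hii with hc | hc | hc <;> simp_all

end projection

/-- The vertex involution of the projection whose blocks are `{i, i'}` for `i ∈ T` and
`{i, g i}`, `{i', (g i)'}` for `i ∉ T`. -/
def projInvol (T : Finset (Fin n)) (g : Fin n → Fin n) : PBV n → PBV n
  | Sum.inl i => if i ∈ T then Sum.inr i else Sum.inl (g i)
  | Sum.inr i => if i ∈ T then Sum.inl i else Sum.inr (g i)

def projDgm (T : Finset (Fin n)) (g : Fin n → Fin n) : Dgm n :=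
  Setoid.pairing (projInvol T g)

section projDgm

variable {T : Finset (Fin n)} {g : Fin n → Fin n}

lemma projInvol_swapUD (x : PBV n) : projInvol T g (swapUD x) = swapUD (projInvol T g x) := by
  rcases x with i | i <;> simp only [projInvol, swapUD] <;> split_ifs <;> rfl

lemma involutive_of_projInvol (h : Involutive (projInvol T g)) (hT : ∀ i ∈ T, g i = i) :
    Involutive g := by
  intro i
  by_cases hi : i ∈ T
  · rw [hT i hi, hT i hi]
  · have hii := h (Sum.inl i)
    by_cases hgi : g i ∈ T <;> simp_all [projInvol]

variable (hg : Involutive g) (hT : ∀ i ∈ T, g i = i)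
include hg hT

lemma projInvol_involutive : Involutive (projInvol T g) := by
  have hgT : ∀ i ∉ T, g i ∉ T := fun i hi hgi => hi (by rw [← hg i, hT _ hgi]; exact hgi)
  rintro (i | i) <;> by_cases hi : i ∈ T <;> simp [projInvol, hi, hgT, hg i]

lemma projDgm_rel_inl_inr {i j : Fin n} :
    (projDgm T g).r (Sum.inl i) (Sum.inr j) ↔ i ∈ T ∧ j = i := by
  rw [projDgm, Setoid.pairing_rel (projInvol_involutive hg hT)]
  by_cases hi : i ∈ T <;> simp [projInvol, hi]

lemma isPB_projDgm : IsPB (projDgm T g) :=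
  isPB_pairing (projInvol_involutive hg hT)

lemma isProj_projDgm : IsProj (projDgm T g) := by
  have hstar : pstar (projDgm T g) = projDgm T g :=
    pstar_pairing (projInvol_involutive hg hT) projInvol_swapUD
  exact ⟨pmul_self_of_vertical hstar fun i j h => ((projDgm_rel_inl_inr hg hT).1 h).2, hstar⟩

lemma domSet_projDgm : domSet (projDgm T g) = T := by
  ext i
  simp [domSet, projDgm_rel_inl_inr hg hT]

end projDgm

lemma eq_of_projDgm_eq {T T' : Finset (Fin n)} {g g' : Fin n → Fin n} (hg : Involutive g)
    (hT : ∀ i ∈ T, g i = i) (hg' : Involutive g') (hT' : ∀ i ∈ T', g' i = i)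
    (h : projDgm T g = projDgm T' g') : T = T' ∧ g = g' := by
  have hσ : projInvol T g = projInvol T' g' := by
    rw [← partner_pairing (projInvol_involutive hg hT),
      ← partner_pairing (projInvol_involutive hg' hT')]
    exact congrArg partner h
  have hTT' : T = T' := by
    ext i
    have hi := congrFun hσ (Sum.inl i)
    by_cases hiT : i ∈ T <;> by_cases hiT' : i ∈ T' <;> simp_all [projInvol]
  subst hTT'
  refine ⟨rfl, funext fun i => ?_⟩
  by_cases hi : i ∈ T
  · rw [hT i hi, hT' i hi]
  · simpa [projInvol, hi] using congrFun hσ (Sum.inl i)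

lemma exists_projDgm_eq {α : Dgm n} (hα : IsPB α) (hproj : IsProj α) :
    ∃ T g, Involutive g ∧ (∀ i ∈ T, g i = i) ∧ projDgm T g = α := by
  set σ := partner α
  let T := univ.filter fun i => σ (Sum.inl i) = Sum.inr i
  let g i := Sum.elim id (fun _ => i) (σ (Sum.inl i))
  have hσl : ∀ i, σ (Sum.inl i) = projInvol T g (Sum.inl i) := by
    intro i
    rcases h : σ (Sum.inl i) with j | j
    · simp [projInvol, T, g, h]
    · obtain rfl : j = i := vertical_of_isProj hα hproj (h ▸ rel_partner hα _)
      simp [projInvol, T, h]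
  have hσ : σ = projInvol T g := by
    funext x
    rcases x with i | i
    · exact hσl i
    · change σ (swapUD (Sum.inl i)) = projInvol T g (swapUD (Sum.inl i))
      rw [show σ (swapUD _) = swapUD (σ _) from partner_swapUD hα hproj.2 _, projInvol_swapUD,
        hσl]
  have hT : ∀ i ∈ T, g i = i := by
    intro i hi
    simp only [T, mem_filter, mem_univ, true_and] at hi
    simp [g, hi]
  refine ⟨T, g, involutive_of_projInvol (hσ ▸ partner_involutive hα) hT, hT, ?_⟩
  rw [projDgm, ← hσ, pairing_partner hα]

abbrev ProjData (n : ℕ) := Σ _ : Finset (Fin n), Fin n → Fin n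

def projParams (n r : ℕ) : Finset (ProjData n) :=
  (powersetCard r univ).sigma fun T => involutionsOn Tᶜ

lemma mem_projParams {r : ℕ} {p : ProjData n} :
    p ∈ projParams n r ↔ #p.1 = r ∧ Involutive p.2 ∧ ∀ i ∈ p.1, p.2 i = i := by
  simp [projParams, mem_involutionsOn]

lemma card_projParams (n r : ℕ) : #(projParams n r) = n.choose r * aSeq (n - r) := by
  rw [projParams, card_sigma, sum_const_nat fun T hT => ?_, card_powersetCard, card_univ,
    Fintype.card_fin]
  rw [card_involutionsOn, card_compl, Fintype.card_fin, mem_powersetCard_univ.1 hT]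

lemma injOn_projDgm (r : ℕ) :
    Set.InjOn (fun p : ProjData n => projDgm p.1 p.2) ↑(projParams n r) := by
  rintro ⟨T, g⟩ hp ⟨T', g'⟩ hp' h
  rw [mem_coe, mem_projParams] at hp hp'
  obtain ⟨rfl, rfl⟩ := eq_of_projDgm_eq hp.2.1 hp.2.2 hp'.2.1 hp'.2.2 h
  rfl

lemma setOf_isProj_eq_image (r : ℕ) :
    {α : Dgm n | α ∈ DPB n r ∧ IsProj α} =
      (fun p : ProjData n => projDgm p.1 p.2) '' ↑(projParams n r) := by
  ext α
  constructor
  · rintro ⟨⟨hα, hrank⟩, hproj⟩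
    obtain ⟨T, g, hg, hT, rfl⟩ := exists_projDgm_eq hα hproj
    refine ⟨⟨T, g⟩, mem_projParams.2 ⟨?_, hg, hT⟩, rfl⟩
    rwa [prank, domSet_projDgm hg hT, Set.ncard_coe_finset] at hrank
  · rintro ⟨⟨T, g⟩, hp, rfl⟩
    obtain ⟨hcard, hg, hT⟩ := mem_projParams.1 hp
    refine ⟨⟨isPB_projDgm hg hT, ?_⟩, isProj_projDgm hg hT⟩
    rw [prank, domSet_projDgm hg hT, Set.ncard_coe_finset, hcard]

end Dgm

theorem numProjectionsDPB_general (n r : ℕ) :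
    Set.ncard {α : Dgm n | α ∈ DPB n r ∧ IsProj α} = Nat.choose n r * aSeq (n - r) := by
  rw [setOf_isProj_eq_image, (injOn_projDgm r).ncard_image, Set.ncard_coe_finset,
    card_projParams]

/-- For `0 ≤ r ≤ n`, the number of projections in `D_r(PB_n)`
equals `C(n,r) · a(n-r)`. -/
theorem numProjectionsDPB (n r : ℕ) (hrn : r ≤ n) :
    Set.ncard {α : Dgm n | α ∈ DPB n r ∧ IsProj α} = Nat.choose n r * aSeq (n - r) :=
  numProjectionsDPB_general n r
end
end

section
/- Let p(n,r) denote the number of projections in D_r(M_n). Then p(0,0) = 1, p(n,r) = 0 if r < 0 or r > n, and for all n ≥ 1 and 0 ≤ r ≤ n, p(n,r) = p(n−1,r−1) + p(n−1,r) + p(n−1,r+1), where terms with out-of-range indices are 0. -/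
/-!
Partial Brauer diagrams on `n` points are formalized as set partitions
(equivalence relations, i.e. `Setoid`s) of the vertex set
`{1,…,n} ∪ {1',…,n'}`, encoded as `Fin n ⊕ Fin n`
(`Sum.inl i` is the upper vertex `i`, `Sum.inr i` is the lower vertex `i'`),
all of whose blocks have size at most 2.  The product of two diagrams is
defined via connectivity (paths) in the product graph, and the involution `*`
by interchanging the two rows of vertices.
-/

noncomputable section

open scoped Classical

open Dgm
/-- `p(n,r)`: the number of projections in `D_r(M_n)`. -/
noncomputable def pM (n r : ℕ) : ℕ := Set.ncard {α : Dgm n | α ∈ Dgm.DM n r ∧ Dgm.IsProj α}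

/-!
A partial Brauer diagram `α` is a projection exactly when `α* = α` and every transversal block
is a vertical line `{i, i'}`; for such `α`, a labelling of the product graph `Γ(α, α)` by blocks
of `α` that is constant along edges shows `α α = α`.

Sort the projections of rank `r` in `M_{m+1}` by the block of the upper point `0`. It is `{0, 0'}`,
or `{0}` (and then `{0'}` is a block too), or a hook `{0, v}` (and then `{0', v'}` is a block too).
Deleting `0` and `0'` identifies the first two classes with the projections of `M_m` of rank
`r - 1` and `r`. In the third class planarity confines every block meeting the inside of a hook
to the inside, so replacing the hooks `{0, v}`, `{0', v'}` by `{0}`, `{0'}` and the vertical line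
`{v, v'}` is a bijection onto the projections of rank `r + 1` of the second class, inverted by
hooking `0` to the leftmost vertical line.
-/

lemma RGen.apply_eq_of_forall_rel {V β : Type*} {r : V → V → Prop} {f : V → β}
    (hf : ∀ x y, r x y → f x = f y) {x y : V} (h : RGen r x y) : f x = f y := by
  induction h with
  | rel h => exact hf _ _ h
  | refl => rfl
  | symm _ ih => exact ih.symm
  | trans _ _ ih₁ ih₂ => exact ih₁.trans ih₂

namespace Dgm

open Sum

variable {n m : ℕ}

instance : Finite (Dgm n) :=
  Finite.of_injective (fun α : Dgm n => α.r) fun _ _ h =>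
    Setoid.ext fun x y => iff_of_eq (congrFun (congrFun h x) y)

/-- `α* = α`, see `pstar_eq_self_iff`. -/
def IsSymmetric (α : Dgm n) : Prop := ∀ x y, α.r x y → α.r (swapUD x) (swapUD y)

def IsVertical (α : Dgm n) : Prop := ∀ i j : Fin n, α.r (inl i) (inr j) → i = j

@[simp] lemma swapUD_swapUD (x : PBV n) : swapUD (swapUD x) = x := by cases x <;> rfl

@[simp] lemma swapUD_inl (i : Fin n) : swapUD (inl i) = inr i := rfl

@[simp] lemma swapUD_inr (i : Fin n) : swapUD (inr i) = inl i := rfl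

lemma pstar_eq_self_iff {α : Dgm n} : pstar α = α ↔ IsSymmetric α := by
  refine ⟨fun h x y hxy => ?_, fun h => Setoid.ext fun x y => ⟨fun hxy => ?_, h x y⟩⟩
  · rw [← h] at hxy
    exact hxy
  · simpa using h _ _ hxy

lemma IsPB.eq_or_eq_of_r {α : Dgm n} (hα : IsPB α) {x y z : PBV n} (hxy : α.r x y) (hxz : α.r x z)
    (hne : x ≠ y) : z = x ∨ z = y := by
  rcases hα x y z hxy hxz with h | h | h
  · exact absurd h hne
  · exact Or.inl h.symm
  · exact Or.inr h.symm

lemma IsPB.r_iff_of_r {α : Dgm n} (hα : IsPB α) {p q y : PBV n} (hpq : α.r p q) (hne : p ≠ q) :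
    α.r p y ↔ y = p ∨ y = q :=
  ⟨fun hpy => hα.eq_or_eq_of_r hpq hpy hne, by rintro (rfl | rfl); exacts [Setoid.refl' _ _, hpq]⟩

lemma IsSymmetric.lowerSingleton {α : Dgm n} (hα : IsSymmetric α) {x : Fin n}
    (h : UpperSingleton α x) : LowerSingleton α x :=
  fun y hy => by simpa using congrArg swapUD (h _ (hα _ _ hy))

lemma IsVertical.r_of_mem_domSet {γ : Dgm n} (hγ : IsVertical γ) {i : Fin n}
    (hi : i ∈ domSet γ) : γ.r (inl i) (inr i) := by
  obtain ⟨j, hj⟩ := hi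
  obtain rfl := hγ _ _ hj
  exact hj

lemma IsProj.isVertical {α : Dgm n} (hα : IsPB α) (h : IsProj α) : IsVertical α := by
  intro i j hij
  have hji : α.r (inl j) (inr i) := Setoid.symm' _ (pstar_eq_self_iff.1 h.2 _ _ hij)
  have hii : α.r (inl i) (inr i) := by
    rw [← h.1]
    exact (RGen.rel (.inl ⟨inl i, inr j, hij, rfl, rfl⟩)).trans
      (RGen.rel (.inr ⟨inl j, inr i, hji, rfl, rfl⟩))
  simpa using hα.eq_or_eq_of_r hij hii (by simp)

/-- Constant along the edges of `Γ(α, α)` when `α` is symmetric and vertical with blocks of size at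
most 2: the middle copy `i''` of `i` carries the block of `i` if `{i, i'}` is a block, and a copy
of it otherwise. -/
def pathLabel (α : Dgm n) : V3 n → Quotient α ⊕ Quotient α
  | inl i => inl (Quotient.mk α (inl i))
  | inr (inr i) => inl (Quotient.mk α (inr i))
  | inr (inl i) => if α.r (inl i) (inr i) then inl (Quotient.mk α (inl i))
      else inr (Quotient.mk α (inl i))

lemma pathLabel_mid_of_r {α : Dgm n} {i : Fin n} (h : α.r (inl i) (inr i)) :
    pathLabel α (inr (inl i)) = inl (Quotient.mk α (inl i)) := if_pos h

lemma pathLabel_mid_eq_of_r {α : Dgm n} (hα : IsPB α) {i j : Fin n} (h : α.r (inl i) (inl j)) :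
    pathLabel α (inr (inl i)) = pathLabel α (inr (inl j)) := by
  by_cases hi : α.r (inl i) (inr i)
  · obtain rfl : j = i := by simpa using hα.eq_or_eq_of_r hi h (by simp)
    rfl
  by_cases hj : α.r (inl j) (inr j)
  · obtain rfl : i = j := by simpa using hα.eq_or_eq_of_r hj (Setoid.symm' _ h) (by simp)
    rfl
  simp only [pathLabel, if_neg hi, if_neg hj]
  exact congrArg inr (Quotient.sound h)

lemma pathLabel_eq_of_prodEdges {α : Dgm n} (hα : IsPB α) (hsym : IsSymmetric α)
    (hvert : IsVertical α) {x y : V3 n} (h : prodEdges α α x y) :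
    pathLabel α x = pathLabel α y := by
  rcases h with ⟨a, b, hab, rfl, rfl⟩ | ⟨a, b, hab, rfl, rfl⟩ <;>
    rcases a with i | i <;> rcases b with j | j
  · exact congrArg inl (Quotient.sound hab)
  · obtain rfl := hvert _ _ hab
    exact (pathLabel_mid_of_r hab).symm
  · obtain rfl := hvert _ _ (Setoid.symm' _ hab)
    exact pathLabel_mid_of_r (Setoid.symm' _ hab)
  · exact pathLabel_mid_eq_of_r hα (hsym _ _ hab)
  · exact pathLabel_mid_eq_of_r hα hab
  · obtain rfl := hvert _ _ hab
    exact (pathLabel_mid_of_r hab).trans (congrArg inl (Quotient.sound hab))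
  · obtain rfl := hvert _ _ (Setoid.symm' _ hab)
    exact (congrArg inl (Quotient.sound hab)).trans (pathLabel_mid_of_r (Setoid.symm' _ hab)).symm
  · exact congrArg inl (Quotient.sound hab)

lemma pmul_self_of_isVertical {α : Dgm n} (hα : IsPB α) (hsym : IsSymmetric α)
    (hvert : IsVertical α) : pmul α α = α := by
  refine Setoid.ext fun x y => ⟨fun h => ?_, fun h => ?_⟩
  · have := RGen.apply_eq_of_forall_rel (f := pathLabel α)
      (fun _ _ => pathLabel_eq_of_prodEdges hα hsym hvert) h
    rcases x with i | i <;> rcases y with j | j <;>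
      exact Quotient.exact (inl_injective this)
  · rcases x with i | i <;> rcases y with j | j
    · exact RGen.rel (.inl ⟨_, _, h, rfl, rfl⟩)
    · obtain rfl := hvert _ _ h
      exact (RGen.rel (.inl ⟨_, _, h, rfl, rfl⟩)).trans (RGen.rel (.inr ⟨_, _, h, rfl, rfl⟩))
    · obtain rfl := hvert _ _ (Setoid.symm' _ h)
      have h' := Setoid.symm' _ h
      exact ((RGen.rel (.inl ⟨_, _, h', rfl, rfl⟩)).trans
        (RGen.rel (.inr ⟨_, _, h', rfl, rfl⟩))).symm
    · exact RGen.rel (.inr ⟨_, _, h, rfl, rfl⟩)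

lemma isProj_iff {α : Dgm n} (hα : IsPB α) : IsProj α ↔ IsSymmetric α ∧ IsVertical α :=
  ⟨fun h => ⟨pstar_eq_self_iff.1 h.2, h.isVertical hα⟩,
    fun ⟨hsym, hvert⟩ => ⟨pmul_self_of_isVertical hα hsym hvert, pstar_eq_self_iff.2 hsym⟩⟩

@[simp] lemma vpos_inl (i : Fin n) : vpos (inl i : PBV n) = i := rfl

@[simp] lemma vpos_inr (i : Fin n) : vpos (inr i : PBV n) = 2 * n - 1 - i := rfl

lemma vpos_lt (x : PBV n) : vpos x < 2 * n := by
  rcases x with i | i <;> simp <;> omega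

lemma vpos_injective : (vpos : PBV n → ℕ).Injective := by
  rintro (i | i) (j | j) h <;> simp only [vpos_inl, vpos_inr] at h <;> have := i.isLt <;>
    have := j.isLt
  · exact congrArg inl (Fin.ext h)
  · omega
  · omega
  · exact congrArg inr (Fin.ext (by omega))

lemma vpos_swapUD (x : PBV n) : vpos (swapUD x) = 2 * n - 1 - vpos x := by
  rcases x with i | i
  · simp
  · simp only [swapUD_inr, vpos_inl, vpos_inr]
    omega

lemma exists_eq_inl_of_vpos_lt {x : PBV n} (h : vpos x < n) : ∃ i, x = inl i := by
  rcases x with i | i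
  · exact ⟨i, rfl⟩
  · simp at h
    omega

def Crosses (a b c d : PBV n) : Prop := vpos a < vpos c ∧ vpos c < vpos b ∧ vpos b < vpos d

lemma IsPlanar.vpos_mem_Ioo {α : Dgm n} (hpl : IsPlanar α) (hα : IsPB α) {p q x y : PBV n}
    (hpq : α.r p q) (hxy : α.r x y) (hx : vpos x ∈ Set.Ioo (vpos p) (vpos q)) :
    vpos y ∈ Set.Ioo (vpos p) (vpos q) := by
  obtain ⟨hpx, hxq⟩ := hx
  have hne : ∀ z, α.r x z → z ≠ p ∧ z ≠ q := by
    refine fun z hxz => ⟨fun hz => ?_, fun hz => ?_⟩ <;> subst hz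
    · rcases hα.eq_or_eq_of_r hpq (Setoid.symm' _ hxz) (fun h => by subst h; omega)
        with rfl | rfl <;> omega
    · rcases hα.eq_or_eq_of_r (Setoid.symm' _ hpq) (Setoid.symm' _ hxz)
        (fun h => by subst h; omega) with rfl | rfl <;> omega
  obtain ⟨hyp, hyq⟩ := hne y hxy
  have hyp' := vpos_injective.ne hyp
  have hyq' := vpos_injective.ne hyq
  refine ⟨?_, ?_⟩
  · by_contra h
    exact hpl y x p q (Setoid.symm' _ hxy) hpq (by omega) hpx hxq
  · by_contra h
    exact hpl p q x y hpq hxy hpx hxq (by omega)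

structure IsMotzkinProj (α : Dgm n) : Prop where
  isPB : IsPB α
  isPlanar : IsPlanar α
  isSymmetric : IsSymmetric α
  isVertical : IsVertical α

/-- The projections of `D_r(M_n)`, see `pM_eq_ncard_motzProj`. -/
def motzProj (n r : ℕ) : Set (Dgm n) := {α | IsMotzkinProj α ∧ prank α = r}

lemma pM_eq_ncard_motzProj (n r : ℕ) : pM n r = (motzProj n r).ncard := by
  refine congrArg Set.ncard (Set.ext fun α => ⟨?_, ?_⟩)
  · rintro ⟨⟨⟨hPB, hpl⟩, hr⟩, hproj⟩
    obtain ⟨hs, hv⟩ := (isProj_iff hPB).1 hproj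
    exact ⟨⟨hPB, hpl, hs, hv⟩, hr⟩
  · rintro ⟨⟨hPB, hpl, hs, hv⟩, hr⟩
    exact ⟨⟨⟨hPB, hpl⟩, hr⟩, (isProj_iff hPB).2 ⟨hs, hv⟩⟩

lemma prank_le (α : Dgm n) : prank α ≤ n := by
  simpa [prank] using Set.ncard_le_ncard (Set.subset_univ (domSet α))

lemma vpos_lt_of_r_of_isLeast {γ : Dgm n} {v : Fin n} (hγ : IsMotzkinProj γ)
    (hv : IsLeast (domSet γ) v) {x y : PBV n} (hxy : γ.r x y) (hx : vpos x < v) : vpos y < v := by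
  obtain ⟨i, rfl⟩ := exists_eq_inl_of_vpos_lt (hx.trans v.isLt)
  rw [vpos_inl] at hx
  have hvv := hγ.isVertical.r_of_mem_domSet hv.1
  have hi : i ∉ domSet γ := fun hi => absurd (hv.2 hi) (not_le.2 (Fin.lt_def.2 hx))
  rcases y with j | j
  · rw [vpos_inl]
    by_contra hj
    rcases (not_lt.1 hj).lt_or_eq with hj | hj
    · have := hγ.isPlanar.vpos_mem_Ioo hγ.isPB hvv (Setoid.symm' _ hxy)
        ⟨hj, by simp only [vpos_inl, vpos_inr]; omega⟩
      simp only [vpos_inl, vpos_inr, Set.mem_Ioo] at this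
      omega
    · obtain rfl : j = v := Fin.ext hj.symm
      exact hi ⟨_, Setoid.trans' _ hxy hvv⟩
  · exact absurd ⟨j, hxy⟩ hi

lemma lt_vpos_of_r_of_isLeast {γ : Dgm n} {v : Fin n} (hγ : IsMotzkinProj γ)
    (hv : IsLeast (domSet γ) v) {x y : PBV n} (hxy : γ.r x y) (hx : 2 * n - 1 - v < vpos x) :
    2 * n - 1 - v < vpos y := by
  have hx' := vpos_lt x
  have hy' := vpos_lt y
  have := vpos_lt_of_r_of_isLeast hγ hv (hγ.isSymmetric _ _ hxy) (by rw [vpos_swapUD]; omega)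
  rw [vpos_swapUD] at this
  omega

lemma coe_domFinset (γ : Dgm n) : (domFinset γ : Set (Fin n)) = domSet γ := by
  ext
  simp [domFinset]

lemma exists_isLeast_domSet {γ : Dgm n} (h : prank γ ≠ 0) : ∃ v, IsLeast (domSet γ) v := by
  have hne : (domFinset γ).Nonempty := by
    rw [← Finset.coe_nonempty, coe_domFinset]
    exact Set.nonempty_of_ncard_ne_zero h
  exact ⟨_, coe_domFinset γ ▸ (domFinset γ).isLeast_min' hne⟩

lemma eq_or_eq_or_eq_of_mem_pair {α : Type*} {p q x y z : α} (hx : x = p ∨ x = q)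
    (hy : y = p ∨ y = q) (hz : z = p ∨ z = q) : x = y ∨ x = z ∨ y = z := by
  rcases hx with rfl | rfl <;> rcases hy with rfl | rfl <;> rcases hz with rfl | rfl <;> simp

section comap

variable {α : Dgm n} {f : PBV m → PBV n}

lemma IsPB.comap (hα : IsPB α) (hf : f.Injective) : IsPB (α.comap f) :=
  fun _ _ _ hxy hxz => (hα _ _ _ hxy hxz).imp (@hf _ _) (Or.imp (@hf _ _) (@hf _ _))

lemma IsPlanar.comap (hα : IsPlanar α) (hf : ∀ x y, vpos x < vpos y → vpos (f x) < vpos (f y)) :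
    IsPlanar (α.comap f) :=
  fun _ _ _ _ hab hcd h₁ h₂ h₃ => hα _ _ _ _ hab hcd (hf _ _ h₁) (hf _ _ h₂) (hf _ _ h₃)

lemma IsSymmetric.comap (hα : IsSymmetric α) (hf : ∀ x, f (swapUD x) = swapUD (f x)) :
    IsSymmetric (α.comap f) := by
  intro x y hxy
  change α.r (f (swapUD x)) (f (swapUD y))
  rw [hf, hf]
  exact hα _ _ hxy

end comap

def shift : PBV m → PBV (m + 1) := Sum.map Fin.succ Fin.succ

@[simp] lemma shift_inl (i : Fin m) : shift (inl i) = inl i.succ := rfl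

@[simp] lemma shift_inr (i : Fin m) : shift (inr i) = inr i.succ := rfl

lemma shift_injective : (shift (m := m)).Injective :=
  Sum.map_injective.2 ⟨Fin.succ_injective m, Fin.succ_injective m⟩

@[simp] lemma shift_ne_inl_zero (x : PBV m) : shift x ≠ inl 0 := by
  rcases x with i | i <;> simp [Fin.succ_ne_zero]

@[simp] lemma shift_ne_inr_zero (x : PBV m) : shift x ≠ inr 0 := by
  rcases x with i | i <;> simp [Fin.succ_ne_zero]

@[simp] lemma vpos_shift (x : PBV m) : vpos (shift x) = vpos x + 1 := by
  rcases x with i | i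
  · rfl
  · have := i.isLt
    simp only [shift_inr, vpos_inr, Fin.val_succ]
    omega

lemma shift_swapUD (x : PBV m) : shift (swapUD x) = swapUD (shift x) := by cases x <;> rfl

lemma eq_zero_or_eq_shift (x : PBV (m + 1)) : x = inl 0 ∨ x = inr 0 ∨ ∃ a, x = shift a := by
  rcases x with i | i <;> cases i using Fin.cases
  exacts [.inl rfl, .inr (.inr ⟨inl _, rfl⟩), .inr (.inl rfl), .inr (.inr ⟨inr _, rfl⟩)]

lemma IsMotzkinProj.comap_shift {α : Dgm (m + 1)} (hα : IsMotzkinProj α) :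
    IsMotzkinProj (α.comap shift) where
  isPB := hα.isPB.comap shift_injective
  isPlanar := hα.isPlanar.comap fun x y h => by simpa using h
  isSymmetric := hα.isSymmetric.comap shift_swapUD
  isVertical := fun _ _ h => Fin.succ_injective m (hα.isVertical _ _ h)

lemma ext_of_shift {s t : Dgm (m + 1)} (h₀ : ∀ y, s.r (inl 0) y ↔ t.r (inl 0) y)
    (h₀' : ∀ y, s.r (inr 0) y ↔ t.r (inr 0) y)
    (h : ∀ a c, s.r (shift a) (shift c) ↔ t.r (shift a) (shift c)) : s = t := by
  refine Setoid.ext fun x y => ?_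
  rcases eq_zero_or_eq_shift x with rfl | rfl | ⟨a, rfl⟩
  · exact h₀ y
  · exact h₀' y
  rcases eq_zero_or_eq_shift y with rfl | rfl | ⟨c, rfl⟩
  · rw [Setoid.comm' s, Setoid.comm' t]
    exact h₀ _
  · rw [Setoid.comm' s, Setoid.comm' t]
    exact h₀' _
  · exact h a c

def extendLabel (b : Bool) (β : Dgm m) : PBV (m + 1) → Quotient β ⊕ Bool
  | inl i => Fin.cases (inr b) (fun j => inl (Quotient.mk β (inl j))) i
  | inr i => Fin.cases (inr true) (fun j => inl (Quotient.mk β (inr j))) i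

/-- The diagram on `m + 1` points which is `β` on the points `1, …, m`, and in which `{0, 0'}` is
a block if `b` and `{0}`, `{0'}` are blocks otherwise. -/
def extend (b : Bool) (β : Dgm m) : Dgm (m + 1) := Setoid.ker (extendLabel b β)

section extend

variable {b : Bool} {β : Dgm m}

@[simp] lemma extend_r_shift {x y : PBV m} : (extend b β).r (shift x) (shift y) ↔ β.r x y := by
  change extendLabel b β (shift x) = extendLabel b β (shift y) ↔ _
  rcases x with i | i <;> rcases y with j | j <;> simp [extendLabel, Quotient.eq]

@[simp] lemma extend_r_zero : (extend b β).r (inl 0) (inr 0) ↔ b = true := by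
  change extendLabel b β _ = extendLabel b β _ ↔ _
  simp [extendLabel]

@[simp] lemma not_extend_r_inl_zero_shift (x : PBV m) : ¬ (extend b β).r (inl 0) (shift x) := by
  change ¬ extendLabel b β _ = extendLabel b β _
  rcases x with i | i <;> simp [extendLabel]

@[simp] lemma not_extend_r_inr_zero_shift (x : PBV m) : ¬ (extend b β).r (inr 0) (shift x) := by
  change ¬ extendLabel b β _ = extendLabel b β _
  rcases x with i | i <;> simp [extendLabel]

lemma comap_shift_extend : (extend b β).comap shift = β :=
  Setoid.ext fun _ _ => extend_r_shift

lemma extend_r_cases {x y : PBV (m + 1)} (h : (extend b β).r x y) :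
    x = y ∨ ((x = inl 0 ∨ x = inr 0) ∧ (y = inl 0 ∨ y = inr 0)) ∨
      ∃ a c, x = shift a ∧ y = shift c ∧ β.r a c := by
  have h' := Setoid.symm' _ h
  rcases eq_zero_or_eq_shift x with rfl | rfl | ⟨a, rfl⟩ <;>
    rcases eq_zero_or_eq_shift y with rfl | rfl | ⟨c, rfl⟩ <;>
    first
    | exact .inl rfl
    | exact .inr (.inl ⟨.inl rfl, .inr rfl⟩)
    | exact .inr (.inl ⟨.inr rfl, .inl rfl⟩)
    | exact .inr (.inr ⟨_, _, rfl, rfl, extend_r_shift.1 h⟩)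
    | simp at h
    | simp at h'

lemma extend_comap_shift {α : Dgm (m + 1)} (h₀ : ∀ a, ¬ α.r (inl 0) (shift a))
    (h₀' : ∀ a, ¬ α.r (inr 0) (shift a)) (hb : α.r (inl 0) (inr 0) ↔ b = true) :
    extend b (α.comap shift) = α := by
  refine ext_of_shift (fun y => ?_) (fun y => ?_) fun _ _ => extend_r_shift
  · rcases eq_zero_or_eq_shift y with rfl | rfl | ⟨c, rfl⟩
    · exact iff_of_true (Setoid.refl' _ _) (Setoid.refl' _ _)
    · exact extend_r_zero.trans hb.symm
    · exact iff_of_false (by simp) (h₀ c)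
  · rcases eq_zero_or_eq_shift y with rfl | rfl | ⟨c, rfl⟩
    · rw [Setoid.comm' α, Setoid.comm' (extend b _)]
      exact extend_r_zero.trans hb.symm
    · exact iff_of_true (Setoid.refl' _ _) (Setoid.refl' _ _)
    · exact iff_of_false (by simp) (h₀' c)

lemma IsPB.extend (hβ : IsPB β) : IsPB (extend b β) := by
  intro x y z hxy hxz
  rcases extend_r_cases hxy with rfl | ⟨hx, hy⟩ | ⟨a, c, rfl, rfl, hac⟩
  · exact .inl rfl
  · rcases extend_r_cases hxz with rfl | ⟨-, hz⟩ | ⟨a', c', rfl, rfl, -⟩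
    · exact .inr (.inl rfl)
    · rcases hx with rfl | rfl <;> rcases hy with rfl | rfl <;> rcases hz with rfl | rfl <;> simp
    · simp at hx
  · rcases extend_r_cases hxz with rfl | ⟨hx, -⟩ | ⟨a', c', ha, rfl, hac'⟩
    · exact .inr (.inl rfl)
    · simp at hx
    · obtain rfl := shift_injective ha
      exact (hβ _ _ _ hac hac').imp (congrArg shift) (Or.imp (congrArg shift) (congrArg shift))

lemma IsPlanar.extend (hβ : IsPlanar β) : IsPlanar (extend b β) := by
  intro x y z w hxy hzw h₁ h₂ h₃
  have := vpos_lt y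
  have := vpos_lt w
  rcases extend_r_cases hxy with rfl | ⟨hx, hy⟩ | ⟨a, c, rfl, rfl, hac⟩
  · omega
  · rcases hx with rfl | rfl <;> rcases hy with rfl | rfl <;> simp at h₁ h₂ h₃ <;> omega
  rcases extend_r_cases hzw with rfl | ⟨hz, hw⟩ | ⟨a', c', rfl, rfl, hac'⟩
  · omega
  · rcases hz with rfl | rfl <;> rcases hw with rfl | rfl <;> simp at h₁ h₂ h₃
    omega
  · simp only [vpos_shift, add_lt_add_iff_right] at h₁ h₂ h₃
    exact hβ _ _ _ _ hac hac' h₁ h₂ h₃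

lemma IsSymmetric.extend (hβ : IsSymmetric β) : IsSymmetric (extend b β) := by
  intro x y hxy
  rcases extend_r_cases hxy with rfl | ⟨hx, hy⟩ | ⟨a, c, rfl, rfl, hac⟩
  · exact Setoid.refl' _ _
  · rcases hx with rfl | rfl <;> rcases hy with rfl | rfl <;>
      first | exact Setoid.refl' _ _ | exact Setoid.symm' _ hxy
  · rw [← shift_swapUD, ← shift_swapUD, extend_r_shift]
    exact hβ _ _ hac

lemma IsVertical.extend (hβ : IsVertical β) : IsVertical (extend b β) := by
  intro i j hij
  rcases extend_r_cases hij with h | ⟨hi, hj⟩ | ⟨a, c, hi, hj, hac⟩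
  · cases h
  · simp only [inl.injEq, reduceCtorEq, or_false, inr.injEq, false_or] at hi hj
    rw [hi, hj]
  · rcases a with a | a <;> rcases c with c | c <;> simp only [shift_inl, shift_inr, inl.injEq,
      inr.injEq, reduceCtorEq] at hi hj
    rw [hi, hj, hβ _ _ hac]

lemma IsMotzkinProj.extend (hβ : IsMotzkinProj β) : IsMotzkinProj (extend b β) :=
  ⟨hβ.isPB.extend, hβ.isPlanar.extend, hβ.isSymmetric.extend, hβ.isVertical.extend⟩

lemma domSet_extend : domSet (extend b β) = Fin.succ '' domSet β ∪ {i | i = 0 ∧ b = true} := by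
  ext i
  cases i using Fin.cases with
  | zero =>
    simp only [domSet, Set.mem_union, Set.mem_image, Fin.succ_ne_zero, and_false, exists_false,
      Set.mem_ofPred_eq, true_and, false_or]
    refine ⟨fun ⟨j, hj⟩ => ?_, fun hb => ⟨0, extend_r_zero.2 hb⟩⟩
    cases j using Fin.cases with
    | zero => exact extend_r_zero.1 hj
    | succ j => exact absurd hj (not_extend_r_inl_zero_shift (inr j))
  | succ k =>
    simp only [domSet, Set.mem_union, Set.mem_image, Fin.succ_inj, exists_eq_right,
      Set.mem_ofPred_eq, Fin.succ_ne_zero, false_and, or_false]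
    refine ⟨fun ⟨j, hj⟩ => ?_, fun ⟨j, hj⟩ => ⟨j.succ, extend_r_shift (x := inl k).2 hj⟩⟩
    cases j using Fin.cases with
    | zero => exact absurd (Setoid.symm' _ hj) (not_extend_r_inr_zero_shift (inl k))
    | succ j => exact ⟨j, extend_r_shift (x := inl k).1 hj⟩

lemma prank_extend : prank (extend b β) = prank β + b.toNat := by
  rw [prank, domSet_extend, prank]
  cases b
  · simp [Set.ncard_image_of_injective _ (Fin.succ_injective m)]
  · rw [Set.union_comm, show {i : Fin (m + 1) | i = 0 ∧ true = true} = {0} by ext; simp,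
      Set.singleton_union, Set.ncard_insert_of_notMem (by simp [Fin.succ_ne_zero]),
      Set.ncard_image_of_injective _ (Fin.succ_injective m)]
    rfl

end extend

section override

variable {ι : Type*}

/-- The diagram whose blocks are the fibres of `k` over `some _`, together with the blocks of `γ`
cut down to the points where `k` is `none`. -/
def override (γ : Dgm n) (k : PBV n → Option ι) : Dgm n :=
  Setoid.ker fun x => (k x).elim (inl (Quotient.mk γ x)) inr

variable {γ : Dgm n} {k : PBV n → Option ι}

lemma override_r {x y : PBV n} :
    (override γ k).r x y ↔ k x = k y ∧ (k x = none → γ.r x y) := by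
  change (k x).elim _ _ = (k y).elim _ _ ↔ _
  cases k x <;> cases k y <;> simp [Quotient.eq]

lemma override_override {ι' : Type*} {k' : PBV n → Option ι'}
    (h : ∀ x, k' x = none → k x = none) : override (override γ k) k' = override γ k' := by
  refine Setoid.ext fun x y => ?_
  simp only [override_r]
  refine and_congr_right fun hxy => imp_congr_right fun hx =>
    ⟨fun h' => h'.2 (h x hx), fun h' => ⟨(h x hx).trans (h y (hxy ▸ hx)).symm, fun _ => h'⟩⟩

lemma override_eq_self (h : ∀ x y, k x ≠ none → (γ.r x y ↔ k x = k y)) : override γ k = γ := by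
  refine Setoid.ext fun x y => override_r.trans ⟨fun ⟨hxy, hγ⟩ => ?_, fun hγ => ⟨?_, fun _ => hγ⟩⟩
  · by_cases hx : k x = none
    · exact hγ hx
    · exact (h x y hx).2 hxy
  · by_cases hx : k x = none
    · by_cases hy : k y = none
      · rw [hx, hy]
      · exact ((h y x hy).1 (Setoid.symm' _ hγ)).symm
    · exact (h x y hx).1 hγ

lemma IsPB.override (hγ : IsPB γ)
    (hk : ∀ x y z, k x ≠ none → k x = k y → k x = k z → x = y ∨ x = z ∨ y = z) :
    IsPB (override γ k) := by
  intro x y z hxy hxz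
  rw [override_r] at hxy hxz
  by_cases hx : k x = none
  · exact hγ _ _ _ (hxy.2 hx) (hxz.2 hx)
  · exact hk x y z hx hxy.1 hxz.1

lemma IsSymmetric.override (hγ : IsSymmetric γ) (e : ι → ι)
    (hk : ∀ x, k (swapUD x) = (k x).map e) : IsSymmetric (override γ k) := by
  intro x y hxy
  rw [override_r] at hxy ⊢
  refine ⟨by rw [hk, hk, hxy.1], fun hx => hγ _ _ (hxy.2 ?_)⟩
  simpa [hk] using hx

lemma IsVertical.override (hγ : IsVertical γ)
    (hk : ∀ i j, k (inl i) ≠ none → k (inl i) = k (inr j) → i = j) :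
    IsVertical (override γ k) := by
  intro i j hij
  rw [override_r] at hij
  by_cases hi : k (inl i) = none
  · exact hγ _ _ (hij.2 hi)
  · exact hk i j hi hij.1

lemma IsPlanar.override (hγ : IsPlanar γ)
    (hkk : ∀ a b c d, k a ≠ none → k a = k b → k c ≠ none → k c = k d → ¬ Crosses a b c d)
    (hγk : ∀ a b c d, γ.r a b → k a = none → k b = none → k c ≠ none → k c = k d →
      ¬ Crosses a b c d ∧ ¬ Crosses c d a b) :
    IsPlanar (override γ k) := by
  intro a b c d hab hcd h₁ h₂ h₃
  rw [override_r] at hab hcd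
  have hcr : Crosses a b c d := ⟨h₁, h₂, h₃⟩
  by_cases ha : k a = none <;> by_cases hc : k c = none
  · exact hγ _ _ _ _ (hab.2 ha) (hcd.2 hc) h₁ h₂ h₃
  · exact (hγk a b c d (hab.2 ha) ha (hab.1 ▸ ha) hc hcd.1).1 hcr
  · exact (hγk c d a b (hcd.2 hc) hc (hcd.1 ▸ hc) ha hab.1).2 hcr
  · exact hkk a b c d ha hab.1 hc hcd.1 hcr

end override

section hook

variable [NeZero n]

def hookLabel (v : Fin n) (x : PBV n) : Option Bool :=
  if x = inl 0 ∨ x = inl v then some true else if x = inr 0 ∨ x = inr v then some false else none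

def unhookLabel (v : Fin n) (x : PBV n) : Option (Fin 3) :=
  if x = inl v ∨ x = inr v then some 0 else if x = inl 0 then some 1
  else if x = inr 0 then some 2 else none

def hook (v : Fin n) (γ : Dgm n) : Dgm n := override γ (hookLabel v)

def unhook (v : Fin n) (α : Dgm n) : Dgm n := override α (unhookLabel v)

variable {v : Fin n}

lemma hookLabel_eq_some_true {x : PBV n} : hookLabel v x = some true ↔ x = inl 0 ∨ x = inl v := by
  unfold hookLabel; split_ifs <;> aesop

lemma hookLabel_eq_some_false {x : PBV n} :
    hookLabel v x = some false ↔ x = inr 0 ∨ x = inr v := by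
  unfold hookLabel; split_ifs <;> aesop

lemma hookLabel_eq_none {x : PBV n} :
    hookLabel v x = none ↔ x ≠ inl v ∧ x ≠ inr v ∧ x ≠ inl 0 ∧ x ≠ inr 0 := by
  unfold hookLabel; split_ifs <;> aesop

lemma hookLabel_eq_some {x : PBV n} {t : Bool} (h : hookLabel v x = some t) :
    x = (if t then inl 0 else inr 0) ∨ x = (if t then inl v else inr v) := by
  cases t
  · exact hookLabel_eq_some_false.1 h
  · exact hookLabel_eq_some_true.1 h

lemma hookLabel_swapUD (x : PBV n) : hookLabel v (swapUD x) = (hookLabel v x).map not := by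
  rcases x with i | i <;> simp only [hookLabel, swapUD_inl, swapUD_inr] <;> split_ifs <;> simp_all

lemma unhookLabel_eq_some_zero {x : PBV n} :
    unhookLabel v x = some 0 ↔ x = inl v ∨ x = inr v := by
  unfold unhookLabel; split_ifs <;> aesop

lemma unhookLabel_eq_some_one (hv : v ≠ 0) {x : PBV n} : unhookLabel v x = some 1 ↔ x = inl 0 := by
  unfold unhookLabel; split_ifs <;> aesop

lemma unhookLabel_eq_some_two (hv : v ≠ 0) {x : PBV n} : unhookLabel v x = some 2 ↔ x = inr 0 := by
  unfold unhookLabel; split_ifs <;> aesop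

lemma unhookLabel_eq_none {x : PBV n} :
    unhookLabel v x = none ↔ x ≠ inl v ∧ x ≠ inr v ∧ x ≠ inl 0 ∧ x ≠ inr 0 := by
  unfold unhookLabel; split_ifs <;> aesop

lemma unhookLabel_eq_unhookLabel (hv : v ≠ 0) {x y : PBV n} (hx : unhookLabel v x ≠ none)
    (hxy : unhookLabel v x = unhookLabel v y) :
    x = y ∨ (x = inl v ∨ x = inr v) ∧ (y = inl v ∨ y = inr v) := by
  obtain ⟨t, ht⟩ := Option.ne_none_iff_exists'.1 hx
  have hy := hxy.symm.trans ht
  fin_cases t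
  · exact .inr ⟨unhookLabel_eq_some_zero.1 ht, unhookLabel_eq_some_zero.1 hy⟩
  · exact .inl (((unhookLabel_eq_some_one hv).1 ht).trans ((unhookLabel_eq_some_one hv).1 hy).symm)
  · exact .inl (((unhookLabel_eq_some_two hv).1 ht).trans ((unhookLabel_eq_some_two hv).1 hy).symm)

lemma unhookLabel_swapUD (x : PBV n) :
    unhookLabel v (swapUD x) = (unhookLabel v x).map (Equiv.swap 1 2) := by
  rcases x with i | i <;> simp only [unhookLabel, swapUD_inl, swapUD_inr] <;> split_ifs <;>
    simp_all [Equiv.swap_apply_of_ne_of_ne]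

lemma isPlanar_hook {γ : Dgm n} (hγ : IsMotzkinProj γ) (hv : IsLeast (domSet γ) v) :
    IsPlanar (hook v γ) := by
  have := v.isLt
  refine hγ.isPlanar.override (fun a b c d ha hab hc hcd => ?_) fun a b c d hab _ _ hc hcd => ?_
  · obtain ⟨t, hat⟩ := Option.ne_none_iff_exists'.1 ha
    obtain ⟨s, hcs⟩ := Option.ne_none_iff_exists'.1 hc
    have hbt := hookLabel_eq_some (hab.symm.trans hat)
    have hds := hookLabel_eq_some (hcd.symm.trans hcs)
    have hat := hookLabel_eq_some hat
    have hcs := hookLabel_eq_some hcs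
    cases t <;> cases s <;> rcases hat with rfl | rfl <;> rcases hbt with rfl | rfl <;>
      rcases hcs with rfl | rfl <;> rcases hds with rfl | rfl <;>
      simp only [Crosses, vpos_inl, vpos_inr, Fin.val_zero, Bool.false_eq_true, ↓reduceIte] <;>
      omega
  · have := vpos_lt_of_r_of_isLeast hγ hv hab
    have := vpos_lt_of_r_of_isLeast hγ hv (Setoid.symm' _ hab)
    have := lt_vpos_of_r_of_isLeast hγ hv hab
    have := lt_vpos_of_r_of_isLeast hγ hv (Setoid.symm' _ hab)
    have := vpos_lt a
    have := vpos_lt b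
    obtain ⟨s, hcs⟩ := Option.ne_none_iff_exists'.1 hc
    have hds := hookLabel_eq_some (hcd.symm.trans hcs)
    have hcs := hookLabel_eq_some hcs
    cases s <;> rcases hcs with rfl | rfl <;> rcases hds with rfl | rfl <;>
      simp only [Crosses, vpos_inl, vpos_inr, Fin.val_zero, Bool.false_eq_true, ↓reduceIte] <;>
      omega

lemma IsMotzkinProj.hook {γ : Dgm n} (hγ : IsMotzkinProj γ) (hv : IsLeast (domSet γ) v) :
    IsMotzkinProj (hook v γ) where
  isPB := hγ.isPB.override fun x y z hx hxy hxz => by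
    obtain ⟨t, ht⟩ := Option.ne_none_iff_exists'.1 hx
    exact eq_or_eq_or_eq_of_mem_pair (hookLabel_eq_some ht)
      (hookLabel_eq_some (hxy.symm.trans ht)) (hookLabel_eq_some (hxz.symm.trans ht))
  isPlanar := isPlanar_hook hγ hv
  isSymmetric := hγ.isSymmetric.override not hookLabel_swapUD
  isVertical := hγ.isVertical.override fun i j hi hij => by
    obtain ⟨t, ht⟩ := Option.ne_none_iff_exists'.1 hi
    rcases hookLabel_eq_some ht, hookLabel_eq_some (hij.symm.trans ht) with ⟨h | h, h' | h'⟩ <;>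
      cases t <;> simp_all

lemma isPlanar_unhook {α : Dgm n} (hα : IsMotzkinProj α) (hv : v ≠ 0)
    (h0v : α.r (inl 0) (inl v)) : IsPlanar (unhook v α) := by
  have := v.isLt
  have h0v' : α.r (inr v) (inr 0) := Setoid.symm' _ (hα.isSymmetric _ _ h0v)
  have hin {x y : PBV n} (hxy : α.r x y) (hx : 0 < vpos x ∧ vpos x < v) :
      0 < vpos y ∧ vpos y < v := by
    simpa using hα.isPlanar.vpos_mem_Ioo hα.isPB h0v hxy (by simpa using hx)
  have hin' {x y : PBV n} (hxy : α.r x y) (hx : 2 * n - 1 - v < vpos x ∧ vpos x < 2 * n - 1) :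
      2 * n - 1 - v < vpos y ∧ vpos y < 2 * n - 1 := by
    simpa using hα.isPlanar.vpos_mem_Ioo hα.isPB h0v' hxy (by simpa using hx)
  refine hα.isPlanar.override (fun a b c d ha hab hc hcd => ?_) fun a b c d hab ha hb hc hcd => ?_
  · have hc' : c = inl v ∨ c = inr v ∨ c = inl 0 ∨ c = inr 0 := by
      simpa [unhookLabel_eq_none, or_iff_not_imp_left] using hc
    rcases unhookLabel_eq_unhookLabel hv ha hab with rfl | ⟨ha', hb'⟩
    · exact fun h => (h.2.1.trans h.1).false
    rcases ha' with rfl | rfl <;> rcases hb' with rfl | rfl <;>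
      rcases hc' with rfl | rfl | rfl | rfl <;>
      simp only [Crosses, vpos_inl, vpos_inr, Fin.val_zero] <;> omega
  · have := hin hab
    have := hin (Setoid.symm' _ hab)
    have := hin' hab
    have := hin' (Setoid.symm' _ hab)
    have := vpos_lt a
    have := vpos_lt b
    rw [unhookLabel_eq_none] at ha hb
    have := vpos_injective.ne ha.2.2.1
    have := vpos_injective.ne ha.2.2.2
    have := vpos_injective.ne hb.2.2.1
    have := vpos_injective.ne hb.2.2.2
    simp only [vpos_inl, vpos_inr, Fin.val_zero] at *
    rcases unhookLabel_eq_unhookLabel hv hc hcd with rfl | ⟨hc', hd'⟩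
    · exact ⟨fun h => (h.2.1.trans h.2.2).false, fun h => (h.1.trans h.2.1).false⟩
    rcases hc' with rfl | rfl <;> rcases hd' with rfl | rfl <;>
      simp only [Crosses, vpos_inl, vpos_inr] <;> omega

lemma IsMotzkinProj.unhook {α : Dgm n} (hα : IsMotzkinProj α) (hv : v ≠ 0)
    (h0v : α.r (inl 0) (inl v)) : IsMotzkinProj (unhook v α) where
  isPB := hα.isPB.override fun x y z hx hxy hxz => by
    rcases unhookLabel_eq_unhookLabel hv hx hxy with h | ⟨hx', hy⟩
    · exact .inl h
    rcases unhookLabel_eq_unhookLabel hv hx hxz with h | ⟨-, hz⟩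
    · exact .inr (.inl h)
    exact eq_or_eq_or_eq_of_mem_pair hx' hy hz
  isPlanar := isPlanar_unhook hα hv h0v
  isSymmetric := hα.isSymmetric.override (Equiv.swap 1 2) unhookLabel_swapUD
  isVertical := hα.isVertical.override fun i j hi hij => by
    rcases unhookLabel_eq_unhookLabel hv hi hij with h | ⟨h | h, h' | h'⟩ <;> simp_all

lemma hook_r_inl_zero_inl {γ : Dgm n} {w : Fin n} :
    (hook v γ).r (inl 0) (inl w) ↔ w = 0 ∨ w = v := by
  rw [hook, override_r, hookLabel_eq_some_true.2 (.inl rfl), eq_comm, hookLabel_eq_some_true]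
  simp

lemma unhook_r_inl_zero {α : Dgm n} (hv : v ≠ 0) {y : PBV n} :
    (unhook v α).r (inl 0) y ↔ y = inl 0 := by
  rw [unhook, override_r, (unhookLabel_eq_some_one hv).2 rfl, eq_comm, unhookLabel_eq_some_one hv]
  simp

lemma unhook_hook {γ : Dgm n} (hγ : IsMotzkinProj γ) (h0 : UpperSingleton γ 0)
    (hv : v ∈ domSet γ) : unhook v (hook v γ) = γ := by
  have hvv := hγ.isVertical.r_of_mem_domSet hv
  have hv0 : v ≠ 0 := by
    rintro rfl
    simpa using h0 _ hvv
  have h0' := hγ.isSymmetric.lowerSingleton h0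
  rw [unhook, hook, override_override fun x hx => by
    rw [unhookLabel_eq_none] at hx
    rw [hookLabel_eq_none]
    exact hx]
  refine override_eq_self fun x y hx => ?_
  obtain rfl | rfl | rfl | rfl : x = inl v ∨ x = inr v ∨ x = inl 0 ∨ x = inr 0 := by
    simpa [unhookLabel_eq_none, or_iff_not_imp_left] using hx
  · rw [hγ.isPB.r_iff_of_r hvv (by simp), unhookLabel_eq_some_zero.2 (.inl rfl)]
    exact unhookLabel_eq_some_zero.symm.trans eq_comm
  · rw [hγ.isPB.r_iff_of_r (Setoid.symm' _ hvv) (by simp), unhookLabel_eq_some_zero.2 (.inr rfl),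
      or_comm]
    exact unhookLabel_eq_some_zero.symm.trans eq_comm
  · rw [(unhookLabel_eq_some_one hv0).2 rfl, eq_comm, unhookLabel_eq_some_one hv0]
    exact ⟨h0 y, by rintro rfl; exact Setoid.refl' _ _⟩
  · rw [(unhookLabel_eq_some_two hv0).2 rfl, eq_comm, unhookLabel_eq_some_two hv0]
    exact ⟨h0' y, by rintro rfl; exact Setoid.refl' _ _⟩

lemma hook_unhook {α : Dgm n} (hα : IsMotzkinProj α) (hv : v ≠ 0) (h0v : α.r (inl 0) (inl v)) :
    hook v (unhook v α) = α := by
  have h0v' : α.r (inr 0) (inr v) := hα.isSymmetric _ _ h0v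
  rw [hook, unhook, override_override fun x hx => by
    rw [hookLabel_eq_none] at hx
    rw [unhookLabel_eq_none]
    exact hx]
  refine override_eq_self fun x y hx => ?_
  obtain ⟨t, ht⟩ := Option.ne_none_iff_exists'.1 hx
  rw [ht, eq_comm]
  cases t
  · rw [hookLabel_eq_some_false] at ht ⊢
    rcases ht with rfl | rfl
    · exact hα.isPB.r_iff_of_r h0v' (by simpa using hv.symm)
    · rw [or_comm]
      exact hα.isPB.r_iff_of_r (Setoid.symm' _ h0v') (by simpa using hv)
  · rw [hookLabel_eq_some_true] at ht ⊢
    rcases ht with rfl | rfl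
    · exact hα.isPB.r_iff_of_r h0v (by simpa using hv.symm)
    · rw [or_comm]
      exact hα.isPB.r_iff_of_r (Setoid.symm' _ h0v) (by simpa using hv)

lemma domSet_hook {γ : Dgm n} (hγ : IsVertical γ) (h0 : 0 ∉ domSet γ) :
    domSet (hook v γ) = domSet γ \ {v} := by
  ext i
  change (∃ j, (override γ (hookLabel v)).r (inl i) (inr j)) ↔ (∃ j, γ.r (inl i) (inr j)) ∧ i ≠ v
  simp only [override_r]
  constructor
  · rintro ⟨j, hlab, hr⟩
    have hnone : hookLabel v (inl i) = none := by
      by_contra h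
      obtain ⟨t, ht⟩ := Option.ne_none_iff_exists'.1 h
      rcases hookLabel_eq_some ht, hookLabel_eq_some (hlab.symm.trans ht) with
        ⟨h₁ | h₁, h₂ | h₂⟩ <;> cases t <;> simp_all
    exact ⟨⟨j, hr hnone⟩, by simpa using (hookLabel_eq_none.1 hnone).1⟩
  · rintro ⟨⟨j, hj⟩, hiv⟩
    obtain rfl := hγ _ _ hj
    have hi0 : i ≠ 0 := by
      rintro rfl
      exact h0 ⟨_, hj⟩
    refine ⟨i, ?_, fun _ => hj⟩
    rw [hookLabel_eq_none.2 (by simp [hiv, hi0]), hookLabel_eq_none.2 (by simp [hiv, hi0])]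

lemma prank_hook_add_one {γ : Dgm n} (hγ : IsVertical γ) (h0 : 0 ∉ domSet γ)
    (hv : v ∈ domSet γ) : prank (hook v γ) + 1 = prank γ := by
  rw [prank, domSet_hook hγ h0, Set.ncard_sdiff_singleton_add_one hv]
  rfl

lemma isLeast_domSet_unhook {α : Dgm n} (hα : IsMotzkinProj α) (hv : v ≠ 0)
    (h0v : α.r (inl 0) (inl v)) : IsLeast (domSet (unhook v α)) v := by
  refine ⟨⟨v, override_r.2 ⟨?_, fun h => ?_⟩⟩, fun i ⟨j, hij⟩ => ?_⟩
  · rw [unhookLabel_eq_some_zero.2 (.inl rfl), unhookLabel_eq_some_zero.2 (.inr rfl)]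
  · simp [unhookLabel_eq_none] at h
  rw [unhook, override_r] at hij
  by_cases hi : unhookLabel v (inl i) = none
  · by_contra hlt
    rw [unhookLabel_eq_none] at hi
    have hi0 : 0 < (i : ℕ) :=
      Fin.val_pos_iff.2 ((Fin.pos_iff_ne_zero' i).2 (by simpa using hi.2.2.1))
    have := hα.isPlanar.vpos_mem_Ioo hα.isPB h0v (hij.2 (unhookLabel_eq_none.2 hi))
      ⟨by simpa using hi0, by simpa using not_le.1 hlt⟩
    simp only [vpos_inl, vpos_inr, Set.mem_Ioo, Fin.val_zero] at this
    omega
  · rcases unhookLabel_eq_unhookLabel hv hi hij.1 with h | ⟨h | h, -⟩ <;> simp_all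

def hookMin (γ : Dgm n) : Dgm n :=
  if h : (domFinset γ).Nonempty then hook ((domFinset γ).min' h) γ else γ

lemma hookMin_eq {γ : Dgm n} {v : Fin n} (hv : IsLeast (domSet γ) v) : hookMin γ = hook v γ := by
  have hne : (domFinset γ).Nonempty := ⟨v, by simpa [← coe_domFinset] using hv.1⟩
  have hmin := (domFinset γ).isLeast_min' hne
  rw [coe_domFinset] at hmin
  rw [hookMin, dif_pos hne, hmin.unique hv]

def zeroHooked : Set (Dgm n) := {α | ∃ v ≠ 0, α.r (inl 0) (inl v)}

def zeroVertical : Set (Dgm n) := {α | α.r (inl 0) (inr 0)}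

lemma upperSingleton_zero {γ : Dgm n} (hγ : IsVertical γ) (hH : γ ∉ zeroHooked)
    (hV : γ ∉ zeroVertical) : UpperSingleton γ 0 := by
  rintro (w | w) h
  · by_contra hw
    exact hH ⟨w, by simpa using hw, h⟩
  · obtain rfl := hγ _ _ h
    exact absurd h hV

lemma image_hookMin (r : ℕ) :
    hookMin '' ((motzProj n (r + 1) \ zeroHooked) \ zeroVertical) = motzProj n r ∩ zeroHooked := by
  ext α
  constructor
  · rintro ⟨γ, ⟨⟨⟨hγ, hr⟩, hH⟩, hV⟩, rfl⟩
    have h0 := upperSingleton_zero hγ.isVertical hH hV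
    obtain ⟨v, hv⟩ := exists_isLeast_domSet (γ := γ) (by omega)
    have h0v : (0 : Fin n) ∉ domSet γ := fun ⟨j, hj⟩ => by simpa using h0 _ hj
    have hv0 : v ≠ 0 := by
      rintro rfl
      exact h0v hv.1
    rw [hookMin_eq hv]
    refine ⟨⟨hγ.hook hv, ?_⟩, v, hv0, hook_r_inl_zero_inl.2 (.inr rfl)⟩
    have := prank_hook_add_one hγ.isVertical h0v hv.1
    omega
  · rintro ⟨⟨hα, hr⟩, v, hv0, h0v⟩
    have hγ := hα.unhook hv0 h0v
    have hv := isLeast_domSet_unhook hα hv0 h0v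
    have hhook := hook_unhook hα hv0 h0v
    refine ⟨unhook v α, ⟨⟨⟨hγ, ?_⟩, ?_⟩, ?_⟩, (hookMin_eq hv).trans hhook⟩
    · have := prank_hook_add_one hγ.isVertical
        (fun ⟨j, hj⟩ => by simpa using (unhook_r_inl_zero hv0).1 hj) hv.1
      rw [hhook] at this
      omega
    · rintro ⟨w, hw0, hw⟩
      exact hw0 (by simpa using (unhook_r_inl_zero hv0).1 hw)
    · intro h
      simpa using (unhook_r_inl_zero hv0).1 (show (unhook v α).r (inl 0) (inr 0) from h)

lemma injOn_hookMin (r : ℕ) :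
    Set.InjOn hookMin ((motzProj n (r + 1) \ zeroHooked) \ zeroVertical) := by
  rintro γ₁ ⟨⟨⟨hγ₁, hr₁⟩, hH₁⟩, hV₁⟩ γ₂ ⟨⟨⟨hγ₂, hr₂⟩, hH₂⟩, hV₂⟩ h
  have h0₁ := upperSingleton_zero hγ₁.isVertical hH₁ hV₁
  have h0₂ := upperSingleton_zero hγ₂.isVertical hH₂ hV₂
  obtain ⟨v₁, hv₁⟩ := exists_isLeast_domSet (γ := γ₁) (by omega)
  obtain ⟨v₂, hv₂⟩ := exists_isLeast_domSet (γ := γ₂) (by omega)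
  rw [hookMin_eq hv₁, hookMin_eq hv₂] at h
  obtain rfl : v₁ = v₂ := by
    have := hook_r_inl_zero_inl.1 (h ▸ hook_r_inl_zero_inl.2 (.inr rfl) : (hook v₂ γ₂).r _ (inl v₁))
    rcases this with rfl | rfl
    · simpa using h0₁ _ (hγ₁.isVertical.r_of_mem_domSet hv₁.1)
    · rfl
  rw [← unhook_hook hγ₁ h0₁ hv₁.1, h, unhook_hook hγ₂ h0₂ hv₂.1]

lemma ncard_motzProj_inter_zeroHooked (r : ℕ) : (motzProj n r ∩ zeroHooked).ncard =
    ((motzProj n (r + 1) \ zeroHooked) \ zeroVertical).ncard := by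
  rw [← image_hookMin, (injOn_hookMin r).ncard_image]

end hook

lemma extend_injective (b : Bool) : (extend b : Dgm m → Dgm (m + 1)).Injective :=
  Function.LeftInverse.injective fun _ => comap_shift_extend

lemma image_extend (b : Bool) (r : ℕ) : extend b '' motzProj m r =
    (motzProj (m + 1) (r + b.toNat) \ zeroHooked) ∩ {α | α ∈ zeroVertical ↔ b = true} := by
  ext α
  constructor
  · rintro ⟨β, ⟨hβ, hr⟩, rfl⟩
    refine ⟨⟨⟨hβ.extend, by rw [prank_extend, hr]⟩, ?_⟩, extend_r_zero⟩
    rintro ⟨v, hv0, hv⟩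
    obtain ⟨c, rfl⟩ := Fin.exists_succ_eq.2 hv0
    exact not_extend_r_inl_zero_shift (inl c) hv
  · rintro ⟨⟨⟨hα, hr⟩, hH⟩, hb⟩
    have h₀ : ∀ a, ¬ α.r (inl 0) (shift a) := by
      rintro (c | c) h
      · exact hH ⟨c.succ, c.succ_ne_zero, h⟩
      · exact c.succ_ne_zero (hα.isVertical _ _ h).symm
    have h₀' : ∀ a, ¬ α.r (inr 0) (shift a) := fun a h =>
      h₀ (swapUD a) (by simpa [shift_swapUD] using hα.isSymmetric _ _ h)
    have hext := extend_comap_shift h₀ h₀' hb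
    refine ⟨α.comap shift, ⟨hα.comap_shift, ?_⟩, hext⟩
    have := prank_extend (b := b) (β := α.comap shift)
    rw [hext] at this
    omega

lemma ncard_image_extend (b : Bool) (r : ℕ) :
    ((motzProj (m + 1) (r + b.toNat) \ zeroHooked) ∩ {α | α ∈ zeroVertical ↔ b = true}).ncard =
      pM m r := by
  rw [← image_extend, (extend_injective b).injOn.ncard_image, pM_eq_ncard_motzProj]

lemma motzProj_zero_inter_zeroVertical : motzProj (m + 1) 0 ∩ zeroVertical = ∅ :=
  Set.eq_empty_of_forall_notMem fun _ ⟨⟨_, hr⟩, hV⟩ =>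
    ((Set.ncard_eq_zero (Set.toFinite _)).1 hr).subset ⟨0, hV⟩

end Dgm

open Dgm

lemma pM_succ (m r : ℕ) :
    pM (m + 1) r = (if r = 0 then 0 else pM m (r - 1)) + pM m r + pM m (r + 1) := by
  have hsingle (r : ℕ) : ((motzProj (m + 1) r \ zeroHooked) \ zeroVertical).ncard = pM m r := by
    rw [← ncard_image_extend false r, Set.sdiff_eq]
    congr 2
    ext
    simp
  have hvert : ((motzProj (m + 1) r \ zeroHooked) ∩ zeroVertical).ncard =
      if r = 0 then 0 else pM m (r - 1) := by
    rcases r with _ | r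
    · rw [Set.subset_eq_empty (Set.inter_subset_inter_left _ Set.sdiff_subset)
        motzProj_zero_inter_zeroVertical]
      simp
    · simpa using ncard_image_extend true r
  rw [pM_eq_ncard_motzProj, ← Set.ncard_inter_add_ncard_sdiff_eq_ncard _ zeroHooked,
    ← Set.ncard_inter_add_ncard_sdiff_eq_ncard (_ \ zeroHooked) zeroVertical,
    ncard_motzProj_inter_zeroHooked, hsingle, hsingle, hvert]
  ring

lemma pM_zero_zero : pM 0 0 = 1 := by
  have : Subsingleton (Dgm 0) := ⟨fun _ _ => Setoid.ext fun x => x.elim Fin.elim0 Fin.elim0⟩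
  rw [pM_eq_ncard_motzProj, Set.ncard_eq_one]
  refine ⟨⊥, Set.eq_singleton_iff_unique_mem.2 ⟨⟨?_, Nat.le_zero.1 (prank_le _)⟩,
    fun _ _ => Subsingleton.elim _ _⟩⟩
  exact ⟨fun x => x.elim Fin.elim0 Fin.elim0, fun x => x.elim Fin.elim0 Fin.elim0,
    fun x => x.elim Fin.elim0 Fin.elim0, fun i => i.elim0⟩

lemma pM_eq_zero_of_lt {n r : ℕ} (h : n < r) : pM n r = 0 := by
  rw [pM_eq_ncard_motzProj, Set.ncard_eq_zero]
  exact Set.eq_empty_of_forall_notMem fun α ⟨_, hr⟩ => (prank_le α).not_gt (hr ▸ h)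

/-- The recurrence for the number `p(n,r)` of projections in
`D_r(M_n)`; terms with out-of-range indices are `0` (note `r - 1` is out of
range when `r = 0`, whence the `if`). -/
theorem pM_recurrence :
    pM 0 0 = 1 ∧
    (∀ n r : ℕ, n < r → pM n r = 0) ∧
    (∀ n r : ℕ, 1 ≤ n → r ≤ n →
      pM n r = (if r = 0 then 0 else pM (n - 1) (r - 1)) + pM (n - 1) r + pM (n - 1) (r + 1)) := by
  refine ⟨pM_zero_zero, fun _ _ => pM_eq_zero_of_lt, fun n r hn _ => ?_⟩
  obtain ⟨m, rfl⟩ := Nat.exists_eq_add_of_le' hn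
  simpa using pM_succ m r
end
end
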